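/- arXiv:2002.05538 — 7 statements merged into one kernel-verified Lean document; each statement's English description precedes it below -/
import Mathlib

section
/- Let G be a finite simple graph on n ≥ 1 vertices that admits an isolate secure dominating set. Then γ_{0s}(G) = 1 if and only if G is the complete graph K_n (i.e., every two distinct vertices of G are adjacent). -/
def Dominates {V : Type*} (G : SimpleGraph V) (S : Finset V) : Prop :=
  ∀ u : V, u ∈ S ∨ ∃ v ∈ S, G.Adj v u

def IsIDS {V : Type*} (G : SimpleGraph V) (S : Finset V) : Prop :=
  Dominates G S ∧ ∃ v ∈ S, ∀ w ∈ S, ¬ G.Adj v w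

def IsISDS {V : Type*} [DecidableEq V] (G : SimpleGraph V) (S : Finset V) : Prop :=
  IsIDS G S ∧ ∀ u ∉ S, ∃ v ∈ S, G.Adj u v ∧ IsIDS G (insert u (S.erase v))

noncomputable def isdNum {V : Type*} [DecidableEq V] (G : SimpleGraph V) : ℕ :=
  sInf {n | ∃ S : Finset V, IsISDS G S ∧ S.card = n}

/-!
A singleton `{v}` is an isolate dominating set exactly when `v` is adjacent to every other vertex,
and swapping `v` for `u` leaves the singleton `{u}`, so `{v}` is secure exactly when every vertex is
universal. Since an isolate dominating set is nonempty, `γ₀ₛ(G) = 1` means precisely that some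
singleton is secure.
-/

section

variable {V : Type*} (G : SimpleGraph V)

theorem IsIDS.nonempty {G : SimpleGraph V} {S : Finset V} (h : IsIDS G S) : S.Nonempty :=
  let ⟨v, hv, _⟩ := h.2
  ⟨v, hv⟩

theorem isIDS_singleton_iff (v : V) : IsIDS G {v} ↔ ∀ u, u ≠ v → G.Adj v u := by
  simp only [IsIDS, Dominates, Finset.mem_singleton, exists_eq_left, forall_eq,
    SimpleGraph.irrefl, not_false_eq_true, and_true]
  exact forall_congr' fun u => or_iff_not_imp_left

variable [DecidableEq V]

theorem isISDS_singleton_iff (v : V) : IsISDS G {v} ↔ ∀ u w, u ≠ w → G.Adj u w := by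
  have hswap : ∀ u, insert u (({v} : Finset V).erase v) = {u} := by simp
  simp only [IsISDS, Finset.mem_singleton, exists_eq_left, hswap, isIDS_singleton_iff]
  constructor
  · rintro ⟨hv, hsecure⟩ u w huw
    by_cases hu : u = v
    · subst hu
      exact hv w huw.symm
    · exact (hsecure u hu).2 w huw.symm
  · intro hcomplete
    exact ⟨fun u hu => hcomplete v u (Ne.symm hu),
      fun u hu => ⟨hcomplete u v hu, fun w hw => hcomplete u w (Ne.symm hw)⟩⟩

theorem isdNum_eq_one_iff : isdNum G = 1 ↔ ∃ v, IsISDS G {v} := by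
  constructor
  · intro h
    -- `sInf ∅ = 0` in `ℕ`, so the value `1` is attained
    have hne : {n | ∃ S : Finset V, IsISDS G S ∧ S.card = n}.Nonempty :=
      Set.nonempty_iff_ne_empty.2 fun hempty => by simp [isdNum, hempty] at h
    obtain ⟨S, hS, hcard⟩ := Nat.sInf_mem hne
    obtain ⟨v, rfl⟩ := Finset.card_eq_one.1 (hcard.trans h)
    exact ⟨v, hS⟩
  · rintro ⟨v, hv⟩
    refine le_antisymm (Nat.sInf_le ⟨{v}, hv, Finset.card_singleton v⟩) ?_
    refine le_csInf ⟨1, {v}, hv, Finset.card_singleton v⟩ ?_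
    rintro _ ⟨S, hS, rfl⟩
    exact hS.1.nonempty.card_pos

end

theorem isdNum_eq_one_iff_complete_general {V : Type*} [Fintype V] [DecidableEq V]
    (G : SimpleGraph V) (hn : 1 ≤ Fintype.card V) :
    isdNum G = 1 ↔ ∀ u v : V, u ≠ v → G.Adj u v := by
  obtain ⟨v₀⟩ := Fintype.card_pos_iff.1 hn
  rw [isdNum_eq_one_iff]
  exact ⟨fun ⟨v, hv⟩ => (isISDS_singleton_iff G v).1 hv,
    fun hcomplete => ⟨v₀, (isISDS_singleton_iff G v₀).2 hcomplete⟩⟩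

/-- For a graph `G` on `n ≥ 1` vertices admitting an ISDS, `γ₀ₛ(G) = 1` iff `G` is complete. -/
theorem isdNum_eq_one_iff_complete {V : Type*} [Fintype V] [DecidableEq V]
    (G : SimpleGraph V) (hn : 1 ≤ Fintype.card V)
    (hex : ∃ S : Finset V, IsISDS G S) :
    isdNum G = 1 ↔ ∀ u v : V, u ≠ v → G.Adj u v :=
  isdNum_eq_one_iff_complete_general G hn
end

section
/- Let m, n ≥ 1 with (m,n) ≠ (1,1). Then the complete bipartite graph K_{m,n} has no isolate secure dominating set. -/
/-- For `m, n ≥ 1` with `(m, n) ≠ (1, 1)`, the complete bipartite graph `K_{m,n}` has no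
isolate secure dominating set. -/
theorem no_ISDS_completeBipartiteGraph (m n : ℕ) (hm : 1 ≤ m) (hn : 1 ≤ n)
    (hmn : (m, n) ≠ (1, 1)) :
    ¬ ∃ S : Finset (Fin m ⊕ Fin n), IsISDS (completeBipartiteGraph (Fin m) (Fin n)) S := by
  rintro ⟨S, ⟨⟨hdom, v, hvS, hviso⟩, hsec⟩⟩
  cases v with
  | inl a =>
    have hR : ∀ y : Fin n, Sum.inr y ∉ S := fun y hy =>
      hviso _ hy (by simp [completeBipartiteGraph])
    have hL : ∀ x : Fin m, Sum.inl x ∈ S := by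
      intro x
      rcases hdom (Sum.inl x) with h | ⟨w, hw, hadj⟩
      · exact h
      · cases w with
        | inl _ => simp [completeBipartiteGraph] at hadj
        | inr y => exact absurd hw (hR y)
    obtain ⟨b⟩ := Fin.pos_iff_nonempty.mp hn
    obtain ⟨v', hv'S, hadj, ⟨hdom', w, hwS', hwiso⟩⟩ := hsec (Sum.inr b) (hR b)
    obtain ⟨c, rfl⟩ : ∃ c, v' = Sum.inl c := by
      cases v' with
      | inl c => exact ⟨c, rfl⟩
      | inr y => exact absurd hv'S (hR y)
    by_cases hm2 : 2 ≤ m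
    · have : Nontrivial (Fin m) := Fin.nontrivial_iff_two_le.mpr hm2
      obtain ⟨c', hc'⟩ := exists_ne c
      have hc'S' : Sum.inl c' ∈ insert (Sum.inr b) (S.erase (Sum.inl c)) := by
        simp [Finset.mem_insert, Finset.mem_erase, hc', hL c']
      cases w with
      | inl x => exact hwiso _ (Finset.mem_insert_self _ _) (by simp [completeBipartiteGraph])
      | inr y => exact hwiso _ hc'S' (by simp [completeBipartiteGraph])
    · have hm1 : m = 1 := by omega
      have hn1 : n ≠ 1 := fun h => hmn (by simp [hm1, h])
      have : Nontrivial (Fin n) := Fin.nontrivial_iff_two_le.mpr (by omega)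
      obtain ⟨b', hb'⟩ := exists_ne b
      rcases hdom' (Sum.inr b') with h | ⟨w, hw, hadj'⟩
      · rcases Finset.mem_insert.mp h with h | h
        · exact hb' (by simpa using h)
        · exact hR b' (Finset.mem_of_mem_erase h)
      · cases w with
        | inl x =>
          rcases Finset.mem_insert.mp hw with h | h
          · simp at h
          · have hx : x ≠ c := by
              intro h'; subst h'
              exact (Finset.mem_erase.mp h).1 rfl
            subst hm1
            exact hx (Subsingleton.elim x c)
        | inr y => simp [completeBipartiteGraph] at hadj'
  | inr a =>
    have hR : ∀ y : Fin m, Sum.inl y ∉ S := fun y hy =>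
      hviso _ hy (by simp [completeBipartiteGraph])
    have hL : ∀ x : Fin n, Sum.inr x ∈ S := by
      intro x
      rcases hdom (Sum.inr x) with h | ⟨w, hw, hadj⟩
      · exact h
      · cases w with
        | inr _ => simp [completeBipartiteGraph] at hadj
        | inl y => exact absurd hw (hR y)
    obtain ⟨b⟩ := Fin.pos_iff_nonempty.mp hm
    obtain ⟨v', hv'S, hadj, ⟨hdom', w, hwS', hwiso⟩⟩ := hsec (Sum.inl b) (hR b)
    obtain ⟨c, rfl⟩ : ∃ c, v' = Sum.inr c := by
      cases v' with
      | inr c => exact ⟨c, rfl⟩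
      | inl y => exact absurd hv'S (hR y)
    by_cases hn2 : 2 ≤ n
    · have : Nontrivial (Fin n) := Fin.nontrivial_iff_two_le.mpr hn2
      obtain ⟨c', hc'⟩ := exists_ne c
      have hc'S' : Sum.inr c' ∈ insert (Sum.inl b) (S.erase (Sum.inr c)) := by
        simp [Finset.mem_insert, Finset.mem_erase, hc', hL c']
      cases w with
      | inr x => exact hwiso _ (Finset.mem_insert_self _ _) (by simp [completeBipartiteGraph])
      | inl y => exact hwiso _ hc'S' (by simp [completeBipartiteGraph])
    · have hn1 : n = 1 := by omega
      have hm1 : m ≠ 1 := fun h => hmn (by simp [hn1, h])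
      have : Nontrivial (Fin m) := Fin.nontrivial_iff_two_le.mpr (by omega)
      obtain ⟨b', hb'⟩ := exists_ne b
      rcases hdom' (Sum.inl b') with h | ⟨w, hw, hadj'⟩
      · rcases Finset.mem_insert.mp h with h | h
        · exact hb' (by simpa using h)
        · exact hR b' (Finset.mem_of_mem_erase h)
      · cases w with
        | inr x =>
          rcases Finset.mem_insert.mp hw with h | h
          · simp at h
          · have hx : x ≠ c := by
              intro h'; subst h'
              exact (Finset.mem_erase.mp h).1 rfl
            subst hn1
            exact hx (Subsingleton.elim x c)
        | inl y => simp [completeBipartiteGraph] at hadj'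
end

section
/- For the path graph P_n on n ≥ 4 vertices, the isolate secure domination number satisfies γ_{0s}(P_n) = ⌈3n/7⌉. -/
namespace PathISDSAux

/- ### counting helper -/


def cntAux (T : Finset ℕ) (a : ℕ) : ℕ := (T.filter (fun i => a ≤ i)).card

lemma cntAux_mem {T : Finset ℕ} {a : ℕ} (h : a ∈ T) : cntAux T a = cntAux T (a+1) + 1 := by
  unfold cntAux
  have he : T.filter (fun i => a ≤ i) = insert a (T.filter (fun i => a+1 ≤ i)) := by
    ext i
    simp only [Finset.mem_insert, Finset.mem_filter]
    constructor
    · rintro ⟨hi, hle⟩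
      rcases Nat.eq_or_lt_of_le hle with h' | h'
      · exact Or.inl h'.symm
      · exact Or.inr ⟨hi, h'⟩
    · rintro (rfl | ⟨hi, hle⟩)
      · exact ⟨h, le_rfl⟩
      · exact ⟨hi, by omega⟩
  rw [he, Finset.card_insert_of_notMem (by simp)]

lemma cntAux_not {T : Finset ℕ} {a : ℕ} (h : a ∉ T) : cntAux T a = cntAux T (a+1) := by
  unfold cntAux
  congr 1
  ext i
  simp only [Finset.mem_filter]
  constructor
  · rintro ⟨hi, hle⟩
    refine ⟨hi, ?_⟩
    rcases Nat.eq_or_lt_of_le hle with h' | h'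
    · exact absurd (h' ▸ hi) h
    · omega
  · rintro ⟨hi, hle⟩; exact ⟨hi, by omega⟩

lemma cntAux_zero {T : Finset ℕ} {a : ℕ} (h : ∀ i ∈ T, i < a) : cntAux T a = 0 := by
  unfold cntAux
  rw [Finset.card_eq_zero, Finset.filter_eq_empty_iff]
  intro i hi
  have := h i hi
  omega

lemma cntAux_all {T : Finset ℕ} : cntAux T 0 = T.card := by
  unfold cntAux
  congr 1
  apply Finset.filter_true_of_mem
  intro i _
  omega

/- ### the lower bound -/

lemma lower_bound (n : ℕ) (hn : 4 ≤ n) (S : Finset (Fin n))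
    (hS : IsISDS (SimpleGraph.pathGraph n) S) : (3 * n + 6) / 7 ≤ S.card := by
  classical
  set T : Finset ℕ := S.image Fin.val with hT
  have memT : ∀ w : ℕ, w ∈ T ↔ ∃ x ∈ S, (x : ℕ) = w := by
    intro w; rw [hT]; exact Finset.mem_image
  have hTlt : ∀ w ∈ T, w < n := by
    intro w hw
    obtain ⟨x, _, rfl⟩ := (memT w).mp hw
    exact x.isLt
  have memF : ∀ (w : ℕ) (h : w < n), ((⟨w, h⟩ : Fin n) ∈ S ↔ w ∈ T) := by
    intro w h
    rw [memT]
    constructor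
    · intro hm; exact ⟨⟨w, h⟩, hm, rfl⟩
    · rintro ⟨x, hx, rfl⟩
      exact hx
  -- translate domination of any set to ℕ facts
  have dom_elim : ∀ (U : Finset (Fin n)), Dominates (SimpleGraph.pathGraph n) U →
      ∀ w, w < n →
        (∃ x ∈ U, (x : ℕ) = w) ∨ (0 < w ∧ ∃ x ∈ U, (x : ℕ) = w - 1) ∨
        (w + 1 < n ∧ ∃ x ∈ U, (x : ℕ) = w + 1) := by
    intro U hU w hw
    rcases hU ⟨w, hw⟩ with h | ⟨v, hv, hadj⟩
    · exact Or.inl ⟨⟨w, hw⟩, h, rfl⟩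
    · rw [SimpleGraph.pathGraph_adj] at hadj
      simp only [Fin.val_mk] at hadj
      have hvlt := v.isLt
      rcases hadj with h | h
      · exact Or.inr (Or.inl ⟨by omega, v, hv, by omega⟩)
      · exact Or.inr (Or.inr ⟨by omega, v, hv, by omega⟩)
  -- the secure condition, fully translated to ℕ facts
  have sec : ∀ w, w < n → w ∉ T → ∃ v : Fin n, v ∈ S ∧
      ((0 < w ∧ (v : ℕ) + 1 = w) ∨ (v : ℕ) = w + 1) ∧
      (∀ z, z < n →
        (z = w ∨ (z ∈ T ∧ (v : ℕ) ≠ z)) ∨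
        (0 < z ∧ (z - 1 = w ∨ (z - 1 ∈ T ∧ (v : ℕ) ≠ z - 1))) ∨
        (z + 1 < n ∧ (z + 1 = w ∨ (z + 1 ∈ T ∧ (v : ℕ) ≠ z + 1)))) := by
    intro w hw hwT
    obtain ⟨v, hvS, hadj, hIDS⟩ := hS.2 ⟨w, hw⟩ (fun hm => hwT ((memF w hw).mp hm))
    rw [SimpleGraph.pathGraph_adj] at hadj
    simp only [Fin.val_mk] at hadj
    have hvlt := v.isLt
    refine ⟨v, hvS, by omega, ?_⟩
    have memIE : ∀ z : ℕ, (∃ x ∈ insert (⟨w, hw⟩ : Fin n) (S.erase v), (x : ℕ) = z) →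
        (z = w ∨ (z ∈ T ∧ (v : ℕ) ≠ z)) := by
      rintro z ⟨x, hx, rfl⟩
      rcases Finset.mem_insert.mp hx with rfl | hx'
      · exact Or.inl rfl
      · obtain ⟨hne, hxS⟩ := Finset.mem_erase.mp hx'
        refine Or.inr ⟨(memT _).mpr ⟨x, hxS, rfl⟩, fun h => hne (Fin.ext h.symm)⟩
    intro z hz
    rcases dom_elim _ hIDS.1 z hz with h | ⟨h0, h⟩ | ⟨h1, h⟩
    · exact Or.inl (memIE z h)
    · exact Or.inr (Or.inl ⟨h0, memIE _ h⟩)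
    · exact Or.inr (Or.inr ⟨h1, memIE _ h⟩)
  -- basic domination for S itself
  have C1 : ∀ w, w < n → w ∈ T ∨ (0 < w ∧ w - 1 ∈ T) ∨ (w + 1 < n ∧ w + 1 ∈ T) := by
    intro w hw
    rcases dom_elim S hS.1.1 w hw with ⟨x, hx, hxe⟩ | ⟨h0, x, hx, hxe⟩ | ⟨h1, x, hx, hxe⟩
    · exact Or.inl (hxe ▸ (memT _).mpr ⟨x, hx, rfl⟩)
    · exact Or.inr (Or.inl ⟨h0, hxe ▸ (memT _).mpr ⟨x, hx, rfl⟩⟩)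
    · exact Or.inr (Or.inr ⟨h1, hxe ▸ (memT _).mpr ⟨x, hx, rfl⟩⟩)
  -- gap-3 constraints
  have C2 : ∀ b, b ∈ T → b+1 ∉ T → b+2 ∉ T → b+3 ∈ T → b+3 < n →
      ((b = 0 ∨ (0 < b ∧ b-1 ∈ T) ∨ (1 < b ∧ b-2 ∈ T)) ∧
       (b+4 = n ∨ (b+4 < n ∧ b+4 ∈ T) ∨ (b+5 < n ∧ b+5 ∈ T))) := by
    intro b hb h1 h2 h3 h3n
    constructor
    · obtain ⟨v, hvS, hadj, hdomv⟩ := sec (b+1) (by omega) h1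
      have hvT : (v : ℕ) ∈ T := (memT _).mpr ⟨v, hvS, rfl⟩
      have hvb : (v : ℕ) = b := by
        rcases hadj with ⟨_, h⟩ | h
        · omega
        · exact absurd (h ▸ hvT) h2
      rcases Nat.eq_zero_or_pos b with rfl | hbpos
      · exact Or.inl rfl
      · rcases hdomv (b-1) (by omega) with (h | ⟨hz, _⟩) | ⟨h0, (h | ⟨hz, hzv⟩)⟩ | ⟨hl, (h | ⟨hz, hzv⟩)⟩
        · omega
        · exact Or.inr (Or.inl ⟨hbpos, hz⟩)
        · omega
        · refine Or.inr (Or.inr ⟨by omega, ?_⟩)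
          have e : b-1-1 = b-2 := by omega
          rwa [e] at hz
        · omega
        · exfalso; apply hzv; omega
    · obtain ⟨v, hvS, hadj, hdomv⟩ := sec (b+2) (by omega) h2
      have hvT : (v : ℕ) ∈ T := (memT _).mpr ⟨v, hvS, rfl⟩
      have hvb : (v : ℕ) = b+3 := by
        rcases hadj with ⟨_, h⟩ | h
        · exfalso; apply h1; have e : (v:ℕ) = b + 1 := by omega
          rwa [e] at hvT
        · omega
      rcases Nat.lt_or_ge (b+4) n with h4 | h4
      · right
        rcases hdomv (b+4) (by omega) with (h | ⟨hz, _⟩) | ⟨h0, (h | ⟨hz, hzv⟩)⟩ | ⟨hl, (h | ⟨hz, hzv⟩)⟩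
        · omega
        · exact Or.inl ⟨h4, hz⟩
        · omega
        · exfalso; apply hzv; omega
        · omega
        · exact Or.inr ⟨hl, hz⟩
      · left; omega
  -- gap-2 constraints
  have C3 : ∀ b, b ∈ T → b+1 ∉ T → b+2 ∈ T → b+2 < n →
      ((b = 0 ∨ (0 < b ∧ b-1 ∈ T) ∨ (1 < b ∧ b-2 ∈ T)) ∨
       (b+3 = n ∨ (b+3 < n ∧ b+3 ∈ T) ∨ (b+4 < n ∧ b+4 ∈ T))) := by
    intro b hb h1 h2 h2n
    obtain ⟨v, hvS, hadj, hdomv⟩ := sec (b+1) (by omega) h1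
    have hvT : (v : ℕ) ∈ T := (memT _).mpr ⟨v, hvS, rfl⟩
    have hvb : (v : ℕ) = b ∨ (v : ℕ) = b + 2 := by
      rcases hadj with ⟨_, h⟩ | h
      · left; omega
      · right; omega
    rcases hvb with hvb | hvb
    · left
      rcases Nat.eq_zero_or_pos b with rfl | hbpos
      · exact Or.inl rfl
      · rcases hdomv (b-1) (by omega) with (h | ⟨hz, _⟩) | ⟨h0, (h | ⟨hz, hzv⟩)⟩ | ⟨hl, (h | ⟨hz, hzv⟩)⟩
        · omega
        · exact Or.inr (Or.inl ⟨hbpos, hz⟩)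
        · omega
        · refine Or.inr (Or.inr ⟨by omega, ?_⟩)
          have e : b-1-1 = b-2 := by omega
          rwa [e] at hz
        · omega
        · exfalso; apply hzv; omega
    · right
      rcases Nat.lt_or_ge (b+3) n with h3 | h3
      · rcases hdomv (b+3) (by omega) with (h | ⟨hz, _⟩) | ⟨h0, (h | ⟨hz, hzv⟩)⟩ | ⟨hl, (h | ⟨hz, hzv⟩)⟩
        · omega
        · exact Or.inr (Or.inl ⟨h3, hz⟩)
        · omega
        · exfalso; apply hzv; omega
        · omega
        · exact Or.inr (Or.inr ⟨hl, hz⟩)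
      · left; omega
  -- left boundary
  have C4L : 0 ∉ T → 1 ∈ T ∧ (2 ∈ T ∨ 3 ∈ T) := by
    intro h0
    have h1T : 1 ∈ T := by
      rcases C1 0 (by omega) with h | ⟨h, _⟩ | ⟨_, h⟩
      · exact absurd h h0
      · omega
      · exact h
    refine ⟨h1T, ?_⟩
    obtain ⟨v, hvS, hadj, hdomv⟩ := sec 0 (by omega) h0
    have hvb : (v : ℕ) = 1 := by
      rcases hadj with ⟨h, _⟩ | h
      · omega
      · omega
    rcases hdomv 2 (by omega) with (h | ⟨hz, _⟩) | ⟨h0', (h | ⟨hz, hzv⟩)⟩ | ⟨hl, (h | ⟨hz, hzv⟩)⟩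
    · omega
    · exact Or.inl hz
    · omega
    · exfalso; apply hzv; omega
    · omega
    · exact Or.inr hz
  -- the main amortized induction
  have key : ∀ m a, a < n → a ∈ T → m = n - a →
      ((a = 0 ∨ (0 < a ∧ a-1 ∈ T) ∨ (1 < a ∧ a-2 ∈ T)) →
          7 * cntAux T a ≥ 3*(n-a) + 1) ∧
      (∀ b, a = b+3 → b ∈ T → b+1 ∉ T → b+2 ∉ T → 7 * cntAux T a ≥ 3*(n-a) + 3) ∧
      (∀ b, a = b+2 → b ∈ T → b+1 ∉ T →
          ¬(b = 0 ∨ (0 < b ∧ b-1 ∈ T) ∨ (1 < b ∧ b-2 ∈ T)) →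
          7 * cntAux T a ≥ 3*(n-a) + 2) := by
    intro m
    induction m using Nat.strong_induction_on with
    | _ m IH =>
    intro a ha haT hm
    refine ⟨?_, ?_, ?_⟩
    · -- state A
      intro hstate
      by_cases h1 : a+1 ∈ T
      · have hlt : a+1 < n := hTlt _ h1
        have hbnd : 7 * cntAux T (a+1) ≥ 3*(n-(a+1)) + 1 :=
          (IH (n-(a+1)) (by omega) (a+1) hlt h1 rfl).1
            (Or.inr (Or.inl ⟨by omega, by simpa using haT⟩))
        have e1 : cntAux T a = cntAux T (a+1) + 1 := cntAux_mem haT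
        omega
      by_cases h2 : a+2 ∈ T
      · have hlt : a+2 < n := hTlt _ h2
        have hbnd : 7 * cntAux T (a+2) ≥ 3*(n-(a+2)) + 1 :=
          (IH (n-(a+2)) (by omega) (a+2) hlt h2 rfl).1
            (Or.inr (Or.inr ⟨by omega, by simpa using haT⟩))
        have e1 : cntAux T a = cntAux T (a+1) + 1 := cntAux_mem haT
        have e2 : cntAux T (a+1) = cntAux T (a+2) := cntAux_not h1
        omega
      by_cases h3 : a+3 ∈ T
      · have hlt : a+3 < n := hTlt _ h3
        have hbnd : 7 * cntAux T (a+3) ≥ 3*(n-(a+3)) + 3 :=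
          (IH (n-(a+3)) (by omega) (a+3) hlt h3 rfl).2.1 a rfl haT h1 h2
        have e1 : cntAux T a = cntAux T (a+1) + 1 := cntAux_mem haT
        have e2 : cntAux T (a+1) = cntAux T (a+2) := cntAux_not h1
        have e3 : cntAux T (a+2) = cntAux T (a+3) := cntAux_not h2
        omega
      · -- no further elements; n ≤ a+2
        have hend : n ≤ a+2 := by
          by_contra hc
          push_neg at hc
          rcases C1 (a+2) (by omega) with h | ⟨_, h⟩ | ⟨_, h⟩
          · exact h2 h
          · have e : a+2-1 = a+1 := by omega
            rw [e] at h
            exact h1 h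
          · exact h3 h
        have e1 : cntAux T a = cntAux T (a+1) + 1 := cntAux_mem haT
        have e2 : cntAux T (a+1) = 0 := cntAux_zero (by
          intro i hi
          have hlt := hTlt i hi
          by_contra hc
          push_neg at hc
          have : i = a+1 := by omega
          exact h1 (this ▸ hi))
        omega
    · -- state B : a = b+3 after a gap of 3
      intro b hab hb hb1 hb2
      subst hab
      by_cases hA1 : b+4 ∈ T
      · have hlt : b+4 < n := hTlt _ hA1
        have hbnd : 7 * cntAux T (b+4) ≥ 3*(n-(b+4)) + 1 :=
          (IH (n-(b+4)) (by omega) (b+4) hlt hA1 rfl).1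
            (Or.inr (Or.inl ⟨by omega, by simpa using haT⟩))
        have e1 : cntAux T (b+3) = cntAux T (b+4) + 1 := cntAux_mem haT
        omega
      · rcases (C2 b hb hb1 hb2 haT ha).2 with hcc | ⟨_, hcc⟩ | ⟨hl, hcc⟩
        · -- b+4 = n : a is the last vertex
          have e1 : cntAux T (b+3) = cntAux T (b+4) + 1 := cntAux_mem haT
          have e2 : cntAux T (b+4) = 0 := cntAux_zero (by
            intro i hi
            have hlt := hTlt i hi
            omega)
          omega
        · exact absurd hcc hA1
        · -- b+5 ∈ T, b+4 ∉ T : state C at b+5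
          have hbnd : 7 * cntAux T (b+5) ≥ 3*(n-(b+5)) + 2 :=
            (IH (n-(b+5)) (by omega) (b+5) hl hcc rfl).2.2 (b+3) rfl haT hA1
              (by
                rintro (h' | ⟨_, h'⟩ | ⟨_, h'⟩)
                · omega
                · have e : b+3-1 = b+2 := by omega
                  rw [e] at h'
                  exact hb2 h'
                · have e : b+3-2 = b+1 := by omega
                  rw [e] at h'
                  exact hb1 h')
          have e1 : cntAux T (b+3) = cntAux T (b+4) + 1 := cntAux_mem haT
          have e2 : cntAux T (b+4) = cntAux T (b+5) := cntAux_not hA1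
          omega
    · -- state C : a = b+2, gap 2 with failed left support
      intro b hab hb hb1 hstate
      subst hab
      by_cases hA1 : b+3 ∈ T
      · have hlt : b+3 < n := hTlt _ hA1
        have hbnd : 7 * cntAux T (b+3) ≥ 3*(n-(b+3)) + 1 :=
          (IH (n-(b+3)) (by omega) (b+3) hlt hA1 rfl).1
            (Or.inr (Or.inl ⟨by omega, by simpa using haT⟩))
        have e1 : cntAux T (b+2) = cntAux T (b+3) + 1 := cntAux_mem haT
        omega
      · rcases C3 b hb hb1 haT ha with hcc | hcc
        · exact absurd hcc hstate
        rcases hcc with hcc | ⟨_, hcc⟩ | ⟨hl, hcc⟩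
        · -- b+3 = n : last vertex
          have e1 : cntAux T (b+2) = cntAux T (b+3) + 1 := cntAux_mem haT
          have e2 : cntAux T (b+3) = 0 := cntAux_zero (by
            intro i hi
            have hlt := hTlt i hi
            omega)
          omega
        · exact absurd hcc hA1
        · -- b+4 ∈ T, b+3 ∉ T : state A at b+4 (support b+2 ∈ T)
          have hbnd : 7 * cntAux T (b+4) ≥ 3*(n-(b+4)) + 1 :=
            (IH (n-(b+4)) (by omega) (b+4) hl hcc rfl).1
              (Or.inr (Or.inr ⟨by omega, by simpa using haT⟩))
          have e1 : cntAux T (b+2) = cntAux T (b+3) + 1 := cntAux_mem haT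
          have e2 : cntAux T (b+3) = cntAux T (b+4) := cntAux_not hA1
          omega
  -- final assembly
  have hTS : T.card = S.card := Finset.card_image_of_injective S Fin.val_injective
  have main : 7 * cntAux T 0 ≥ 3 * n := by
    by_cases h0 : 0 ∈ T
    · have hbnd : 7 * cntAux T 0 ≥ 3*(n-0) + 1 :=
        (key (n-0) 0 (by omega) h0 rfl).1 (Or.inl rfl)
      omega
    · obtain ⟨h1T, h23⟩ := C4L h0
      have e0 : cntAux T 0 = cntAux T 1 := cntAux_not h0
      have e1 : cntAux T 1 = cntAux T 2 + 1 := cntAux_mem h1T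
      rcases h23 with h2 | h3
      · have hbnd : 7 * cntAux T 2 ≥ 3*(n-2) + 1 :=
          (key (n-2) 2 (hTlt _ h2) h2 rfl).1 (Or.inr (Or.inl ⟨by omega, h1T⟩))
        omega
      · by_cases h2' : 2 ∈ T
        · have hbnd : 7 * cntAux T 2 ≥ 3*(n-2) + 1 :=
            (key (n-2) 2 (hTlt _ h2') h2' rfl).1 (Or.inr (Or.inl ⟨by omega, h1T⟩))
          omega
        · have e2 : cntAux T 2 = cntAux T 3 := cntAux_not h2'
          have hbnd : 7 * cntAux T 3 ≥ 3*(n-3) + 2 :=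
            (key (n-3) 3 (hTlt _ h3) h3 rfl).2.2 1 rfl h1T h2'
              (by
                rintro (h' | ⟨_, h'⟩ | ⟨h', _⟩)
                · omega
                · exact h0 h'
                · omega)
          omega
  have hfin : cntAux T 0 = S.card := by rw [cntAux_all, hTS]
  omega

/- ### upper bound machinery -/


def psetAux (n : ℕ) (p : ℕ → Prop) [DecidablePred p] : Finset (Fin n) :=
  Finset.univ.filter (fun i => p i.val)

lemma mem_psetAux {n : ℕ} {p : ℕ → Prop} [DecidablePred p] {i : Fin n} :
    i ∈ psetAux n p ↔ p i.val := by simp [psetAux]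

lemma psetAux_insert_erase {n : ℕ} {p : ℕ → Prop} [DecidablePred p] (u v : Fin n) :
    insert u ((psetAux n p).erase v) = psetAux n (fun w => w = u.val ∨ (p w ∧ w ≠ v.val)) := by
  ext x
  simp only [Finset.mem_insert, Finset.mem_erase, mem_psetAux]
  constructor
  · rintro (rfl | ⟨hne, hx⟩)
    · exact Or.inl rfl
    · exact Or.inr ⟨hx, fun h => hne (Fin.ext h)⟩
  · rintro (h | ⟨hx, hne⟩)
    · exact Or.inl (Fin.ext h)
    · exact Or.inr ⟨fun h => hne (by rw [h]), hx⟩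

lemma dominates_psetAux {n : ℕ} {p : ℕ → Prop} [DecidablePred p]
    (h : ∀ w, w < n → p w ∨ (0 < w ∧ p (w-1)) ∨ (w+1 < n ∧ p (w+1))) :
    Dominates (SimpleGraph.pathGraph n) (psetAux n p) := by
  intro x
  rcases h x.val x.isLt with hp | ⟨hpos, hp⟩ | ⟨hlt, hp⟩
  · exact Or.inl (mem_psetAux.mpr hp)
  · refine Or.inr ⟨⟨x.val - 1, by omega⟩, mem_psetAux.mpr (by simpa using hp), ?_⟩
    rw [SimpleGraph.pathGraph_adj]; simp; omega
  · refine Or.inr ⟨⟨x.val + 1, hlt⟩, mem_psetAux.mpr (by simpa using hp), ?_⟩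
    rw [SimpleGraph.pathGraph_adj]; simp

lemma isIDS_psetAux {n : ℕ} {p : ℕ → Prop} [DecidablePred p]
    (hdom : ∀ w, w < n → p w ∨ (0 < w ∧ p (w-1)) ∨ (w+1 < n ∧ p (w+1)))
    (w₀ : ℕ) (h0 : w₀ < n) (hp0 : p w₀)
    (hL : ¬(0 < w₀ ∧ p (w₀-1))) (hR : ¬(w₀+1 < n ∧ p (w₀+1))) :
    IsIDS (SimpleGraph.pathGraph n) (psetAux n p) := by
  refine ⟨dominates_psetAux hdom, ⟨⟨w₀, h0⟩, mem_psetAux.mpr hp0, ?_⟩⟩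
  intro w hw hadj
  rw [SimpleGraph.pathGraph_adj] at hadj
  simp only [Fin.val_mk] at hadj
  have hpw := mem_psetAux.mp hw
  rcases hadj with h | h
  · exact hR ⟨h ▸ w.isLt, h ▸ hpw⟩
  · apply hL
    refine ⟨by omega, ?_⟩
    have hww : w₀ - 1 = w.val := by omega
    rw [hww]; exact hpw

/- ### the concrete pattern -/

def PP (n : ℕ) : ℕ → Prop := fun i =>
  (i % 7 = 1 ∨ i % 7 = 3 ∨ i % 7 = 5) ∨ (i + 1 = n ∧ (n % 7 = 1 ∨ n % 7 = 3 ∨ n % 7 = 5))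

instance (n : ℕ) : DecidablePred (PP n) := fun _ => by unfold PP; infer_instance

lemma base_dom (n : ℕ) : ∀ w, w < n →
    (w % 7 = 1 ∨ w % 7 = 3 ∨ w % 7 = 5) ∨
    (0 < w ∧ ((w-1) % 7 = 1 ∨ (w-1) % 7 = 3 ∨ (w-1) % 7 = 5)) ∨
    (w + 1 = n) ∨
    (w+1 < n ∧ ((w+1) % 7 = 1 ∨ (w+1) % 7 = 3 ∨ (w+1) % 7 = 5)) := by
  intro w hw; omega

lemma end_case (n : ℕ) (hn : 11 ≤ n) :
    PP n (n-1) ∨ ((n-1) % 7 = 1 ∨ (n-1) % 7 = 3 ∨ (n-1) % 7 = 5) ∨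
      ((n-2) % 7 = 1 ∨ (n-2) % 7 = 3 ∨ (n-2) % 7 = 5) := by
  unfold PP; omega

lemma PP_dom (n : ℕ) (hn : 11 ≤ n) : ∀ w, w < n →
    PP n w ∨ (0 < w ∧ PP n (w-1)) ∨ (w+1 < n ∧ PP n (w+1)) := by
  intro w hw
  rcases base_dom n w hw with h | ⟨h0, h⟩ | h | ⟨h1, h⟩
  · exact Or.inl (Or.inl h)
  · exact Or.inr (Or.inl ⟨h0, Or.inl h⟩)
  · -- w = n-1
    rcases end_case n hn with he | he | he
    · refine Or.inl ?_
      have h' : w = n - 1 := by omega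
      rwa [h']
    · exact Or.inl (Or.inl (by omega))
    · exact Or.inr (Or.inl ⟨by omega, Or.inl (by omega)⟩)
  · exact Or.inr (Or.inr ⟨h1, Or.inl h⟩)

/-- swapping in `u`, removing `u+1`, preserves domination given one local fact. -/
lemma swap_dom_up {n : ℕ} {p : ℕ → Prop}
    (hdom : ∀ w, w < n → p w ∨ (0 < w ∧ p (w-1)) ∨ (w+1 < n ∧ p (w+1)))
    (u : ℕ)
    (hkey : u+2 < n → (p (u+2) ∨ (u+3 < n ∧ p (u+3)))) :
    ∀ w, w < n → (w = u ∨ (p w ∧ w ≠ u+1)) ∨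
      (0 < w ∧ ((w-1) = u ∨ (p (w-1) ∧ (w-1) ≠ u+1))) ∨
      (w+1 < n ∧ ((w+1) = u ∨ (p (w+1) ∧ (w+1) ≠ u+1))) := by
  intro w hw
  by_cases h1 : w = u
  · exact Or.inl (Or.inl h1)
  by_cases h2 : w = u + 1
  · exact Or.inr (Or.inl ⟨by omega, Or.inl (by omega)⟩)
  by_cases h3 : w = u + 2
  · rcases hkey (by omega) with hk | ⟨hk1, hk⟩
    · exact Or.inl (Or.inr ⟨by rwa [h3], by omega⟩)
    · refine Or.inr (Or.inr ⟨by omega, Or.inr ⟨?_, by omega⟩⟩)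
      have h' : w + 1 = u + 3 := by omega
      rwa [h']
  · rcases hdom w hw with h | ⟨h0, h⟩ | ⟨hlt, h⟩
    · exact Or.inl (Or.inr ⟨h, h2⟩)
    · exact Or.inr (Or.inl ⟨h0, Or.inr ⟨h, by omega⟩⟩)
    · exact Or.inr (Or.inr ⟨hlt, Or.inr ⟨h, by omega⟩⟩)

/-- swapping in `u`, removing `u-1`, preserves domination given local facts. -/
lemma swap_dom_down {n : ℕ} {p : ℕ → Prop}
    (hdom : ∀ w, w < n → p w ∨ (0 < w ∧ p (w-1)) ∨ (w+1 < n ∧ p (w+1)))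
    (u : ℕ) (hu1 : 1 ≤ u) (hun : u < n)
    (hkey : 2 ≤ u → (p (u-2) ∨ (2 < u ∧ p (u-3)))) :
    ∀ w, w < n → (w = u ∨ (p w ∧ w ≠ u-1)) ∨
      (0 < w ∧ ((w-1) = u ∨ (p (w-1) ∧ (w-1) ≠ u-1))) ∨
      (w+1 < n ∧ ((w+1) = u ∨ (p (w+1) ∧ (w+1) ≠ u-1))) := by
  intro w hw
  by_cases h1 : w = u
  · exact Or.inl (Or.inl h1)
  by_cases h2 : w + 1 = u
  · exact Or.inr (Or.inr ⟨by omega, Or.inl h2⟩)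
  by_cases h3 : w + 2 = u
  · rcases hkey (by omega) with hk | ⟨hk1, hk⟩
    · refine Or.inl (Or.inr ⟨?_, by omega⟩)
      have h' : w = u - 2 := by omega
      rwa [h']
    · refine Or.inr (Or.inl ⟨by omega, Or.inr ⟨?_, by omega⟩⟩)
      have h' : w - 1 = u - 3 := by omega
      rwa [h']
  · rcases hdom w hw with h | ⟨h0, h⟩ | ⟨hlt, h⟩
    · exact Or.inl (Or.inr ⟨h, by omega⟩)
    · exact Or.inr (Or.inl ⟨h0, Or.inr ⟨h, by omega⟩⟩)
    · exact Or.inr (Or.inr ⟨hlt, Or.inr ⟨h, by omega⟩⟩)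

lemma secure_step {n : ℕ} (u : Fin n) (B w₀ : ℕ) (hB : B < n)
    (hadj : (u : ℕ) + 1 = B ∨ B + 1 = (u : ℕ))
    (hBP : PP n B)
    (hdom : ∀ w, w < n → (w = (u:ℕ) ∨ (PP n w ∧ w ≠ B)) ∨
      (0 < w ∧ ((w-1) = (u:ℕ) ∨ (PP n (w-1) ∧ (w-1) ≠ B))) ∨
      (w+1 < n ∧ ((w+1) = (u:ℕ) ∨ (PP n (w+1) ∧ (w+1) ≠ B))))
    (h0 : w₀ < n) (hp0 : w₀ = (u:ℕ) ∨ (PP n w₀ ∧ w₀ ≠ B))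
    (hL : ¬(0 < w₀ ∧ ((w₀-1) = (u:ℕ) ∨ (PP n (w₀-1) ∧ (w₀-1) ≠ B))))
    (hR : ¬(w₀+1 < n ∧ ((w₀+1) = (u:ℕ) ∨ (PP n (w₀+1) ∧ (w₀+1) ≠ B)))) :
    ∃ v ∈ psetAux n (PP n), (SimpleGraph.pathGraph n).Adj u v ∧
      IsIDS (SimpleGraph.pathGraph n) (insert u ((psetAux n (PP n)).erase v)) := by
  refine ⟨⟨B, hB⟩, mem_psetAux.mpr hBP, ?_, ?_⟩
  · rw [SimpleGraph.pathGraph_adj]; exact hadj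
  · rw [psetAux_insert_erase]
    exact isIDS_psetAux hdom w₀ h0 hp0 hL hR

lemma upper_big (n : ℕ) (hn : 11 ≤ n) :
    IsISDS (SimpleGraph.pathGraph n) (psetAux n (PP n)) := by
  constructor
  · exact isIDS_psetAux (PP_dom n hn) 1 (by omega)
      (by unfold PP; omega) (by unfold PP; omega) (by unfold PP; omega)
  · intro u hu
    rw [mem_psetAux] at hu
    unfold PP at hu
    have han : (u:ℕ) < n := u.isLt
    have hcase : (u:ℕ) = 0 ∨ (u:ℕ) = 2 ∨ ((u:ℕ) % 7 = 0 ∧ 7 ≤ (u:ℕ)) ∨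
        ((u:ℕ) % 7 = 2 ∧ 9 ≤ (u:ℕ)) ∨ ((u:ℕ) % 7 = 4 ∧ 4 ≤ (u:ℕ)) ∨
        ((u:ℕ) % 7 = 6 ∧ 6 ≤ (u:ℕ)) := by omega
    have hB1 : (u:ℕ) = 0 ∨ (u:ℕ) = 2 ∨ ((u:ℕ) % 7 = 0 ∧ 7 ≤ (u:ℕ)) ∨ ((u:ℕ) % 7 = 2 ∧ 9 ≤ (u:ℕ)) →
        (u:ℕ) + 1 < n := by omega
    rcases hcase with h | h | h | h | h | h
    · -- u = 0, defender 1 = u+1, isolate 0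
      refine secure_step u ((u:ℕ)+1) 0 (hB1 (by omega)) (by omega) (by unfold PP; omega)
        (swap_dom_up (PP_dom n hn) (u:ℕ) (by intro _; unfold PP; omega))
        (by omega) (by omega) (by unfold PP; omega) (by unfold PP; omega)
    · -- u = 2, defender 3 = u+1, isolate 5
      refine secure_step u ((u:ℕ)+1) 5 (hB1 (by omega)) (by omega) (by unfold PP; omega)
        (swap_dom_up (PP_dom n hn) (u:ℕ) (by intro _; unfold PP; omega))
        (by omega) (by unfold PP; omega) (by unfold PP; omega) (by unfold PP; omega)
    · -- u%7 = 0, u ≥ 7, defender u+1, isolate 1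
      refine secure_step u ((u:ℕ)+1) 1 (hB1 (by omega)) (by omega) (by unfold PP; omega)
        (swap_dom_up (PP_dom n hn) (u:ℕ) (by intro _; unfold PP; omega))
        (by omega) (by unfold PP; omega) (by unfold PP; omega) (by unfold PP; omega)
    · -- u%7 = 2, u ≥ 9, defender u+1, isolate 1
      refine secure_step u ((u:ℕ)+1) 1 (hB1 (by omega)) (by omega) (by unfold PP; omega)
        (swap_dom_up (PP_dom n hn) (u:ℕ) (by intro _; unfold PP; omega))
        (by omega) (by unfold PP; omega) (by unfold PP; omega) (by unfold PP; omega)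
    · -- u%7 = 4, defender u-1, isolate 1
      refine secure_step u ((u:ℕ)-1) 1 (by omega) (by omega) (by unfold PP; omega)
        (swap_dom_down (PP_dom n hn) (u:ℕ) (by omega) han (by intro _; unfold PP; omega))
        (by omega) (by unfold PP; omega) (by unfold PP; omega) (by unfold PP; omega)
    · -- u%7 = 6, defender u-1, isolate 1
      refine secure_step u ((u:ℕ)-1) 1 (by omega) (by omega) (by unfold PP; omega)
        (swap_dom_down (PP_dom n hn) (u:ℕ) (by omega) han (by intro _; unfold PP; omega))
        (by omega) (by unfold PP; omega) (by unfold PP; omega) (by unfold PP; omega)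

lemma card_psetAux (n : ℕ) (p : ℕ → Prop) [DecidablePred p] :
    (psetAux n p).card = ((Finset.range n).filter p).card := by
  apply Finset.card_bij (fun (i : Fin n) _ => i.val)
  · intro a ha
    simp only [psetAux, Finset.mem_filter, Finset.mem_univ, true_and] at ha
    simp only [Finset.mem_filter, Finset.mem_range]
    exact ⟨a.isLt, ha⟩
  · intro a _ b _ h; exact Fin.ext h
  · intro b hb
    simp only [Finset.mem_filter, Finset.mem_range] at hb
    exact ⟨⟨b, hb.1⟩, by simp only [psetAux, Finset.mem_filter, Finset.mem_univ, true_and]; exact hb.2, rfl⟩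

lemma count_base : ∀ m : ℕ,
    ((Finset.range m).filter (fun i => i % 7 = 1 ∨ i % 7 = 3 ∨ i % 7 = 5)).card
      = 3 * (m / 7) + (m % 7) / 2 := by
  intro m
  induction m with
  | zero => simp
  | succ k ih =>
    rw [Finset.range_add_one, Finset.filter_insert]
    by_cases hk : k % 7 = 1 ∨ k % 7 = 3 ∨ k % 7 = 5
    · rw [if_pos hk, Finset.card_insert_of_notMem (by simp)]
      omega
    · rw [if_neg hk]; omega

lemma count_PP (n : ℕ) (hn : 11 ≤ n) :
    ((Finset.range n).filter (PP n)).card = (3 * n + 6) / 7 := by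
  have hsplit : (Finset.range n).filter (PP n) =
      ((Finset.range n).filter (fun i => i % 7 = 1 ∨ i % 7 = 3 ∨ i % 7 = 5)) ∪
      ((Finset.range n).filter (fun i => i + 1 = n ∧ (n % 7 = 1 ∨ n % 7 = 3 ∨ n % 7 = 5))) := by
    ext i
    simp only [Finset.mem_filter, Finset.mem_union, Finset.mem_range]
    unfold PP
    tauto
  have hdisj : Disjoint
      ((Finset.range n).filter (fun i => i % 7 = 1 ∨ i % 7 = 3 ∨ i % 7 = 5))
      ((Finset.range n).filter (fun i => i + 1 = n ∧ (n % 7 = 1 ∨ n % 7 = 3 ∨ n % 7 = 5))) := by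
    rw [Finset.disjoint_left]
    intro i hi hj
    simp only [Finset.mem_filter, Finset.mem_range] at hi hj
    omega
  rw [hsplit, Finset.card_union_of_disjoint hdisj, count_base]
  by_cases hb : n % 7 = 1 ∨ n % 7 = 3 ∨ n % 7 = 5
  · have h2 : (Finset.range n).filter (fun i => i + 1 = n ∧ (n % 7 = 1 ∨ n % 7 = 3 ∨ n % 7 = 5))
        = {n - 1} := by
      ext i
      simp only [Finset.mem_filter, Finset.mem_range, Finset.mem_singleton]
      constructor
      · intro h; omega
      · intro h; refine ⟨by omega, by omega, hb⟩
    rw [h2, Finset.card_singleton]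
    omega
  · have h2 : (Finset.range n).filter (fun i => i + 1 = n ∧ (n % 7 = 1 ∨ n % 7 = 3 ∨ n % 7 = 5))
        = ∅ := by
      ext i
      simp only [Finset.mem_filter, Finset.mem_range, Finset.notMem_empty, iff_false, not_and]
      intro _ _; exact hb
    rw [h2, Finset.card_empty]
    omega

lemma isdNum_eq_of {n v : ℕ} (S : Finset (Fin n))
    (hS : IsISDS (SimpleGraph.pathGraph n) S) (hc : S.card = v)
    (hlb : ∀ S' : Finset (Fin n), IsISDS (SimpleGraph.pathGraph n) S' → v ≤ S'.card) :
    isdNum (SimpleGraph.pathGraph n) = v := by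
  unfold isdNum
  apply le_antisymm
  · exact Nat.sInf_le ⟨S, hS, hc⟩
  · refine le_csInf ⟨v, S, hS, hc⟩ ?_
    rintro b ⟨S', hS', rfl⟩
    exact hlb S' hS'

end PathISDSAux

open PathISDSAux in
/-- For the path graph `P_n` on `n ≥ 4` vertices, `γ₀ₛ(P_n) = ⌈3n/7⌉`
(note `(3 * n + 6) / 7 = ⌈3n/7⌉` in natural-number arithmetic). -/
theorem isdNum_pathGraph (n : ℕ) (hn : 4 ≤ n) :
    isdNum (SimpleGraph.pathGraph n) = (3 * n + 6) / 7 := by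
  by_cases hbig : 11 ≤ n
  · exact isdNum_eq_of (psetAux n (PP n)) (upper_big n hbig)
      (by rw [card_psetAux]; exact count_PP n hbig)
      (fun S' h' => lower_bound n hn S' h')
  · have hsmall : n ≤ 10 := by omega
    interval_cases n
    · exact isdNum_eq_of ({0, 3} : Finset (Fin 4))
        (by unfold IsISDS IsIDS Dominates; simp only [SimpleGraph.pathGraph_adj]; decide)
        (by decide) (fun S' h' => lower_bound 4 (by omega) S' h')
    · exact isdNum_eq_of ({1, 3, 4} : Finset (Fin 5))
        (by unfold IsISDS IsIDS Dominates; simp only [SimpleGraph.pathGraph_adj]; decide)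
        (by decide) (fun S' h' => lower_bound 5 (by omega) S' h')
    · exact isdNum_eq_of ({1, 3, 5} : Finset (Fin 6))
        (by unfold IsISDS IsIDS Dominates; simp only [SimpleGraph.pathGraph_adj]; decide)
        (by decide) (fun S' h' => lower_bound 6 (by omega) S' h')
    · exact isdNum_eq_of ({1, 3, 5} : Finset (Fin 7))
        (by unfold IsISDS IsIDS Dominates; simp only [SimpleGraph.pathGraph_adj]; decide)
        (by decide) (fun S' h' => lower_bound 7 (by omega) S' h')
    · exact isdNum_eq_of ({1, 3, 5, 7} : Finset (Fin 8))
        (by unfold IsISDS IsIDS Dominates; simp only [SimpleGraph.pathGraph_adj]; decide)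
        (by decide) (fun S' h' => lower_bound 8 (by omega) S' h')
    · exact isdNum_eq_of ({1, 3, 5, 8} : Finset (Fin 9))
        (by unfold IsISDS IsIDS Dominates; simp only [SimpleGraph.pathGraph_adj]; decide)
        (by decide) (fun S' h' => lower_bound 9 (by omega) S' h')
    · exact isdNum_eq_of ({1, 3, 5, 8, 9} : Finset (Fin 10))
        (by unfold IsISDS IsIDS Dominates; simp only [SimpleGraph.pathGraph_adj]; decide)
        (by decide) (fun S' h' => lower_bound 10 (by omega) S' h')
end

section
/- For the cycle graph C_n on n ≥ 5 vertices, the isolate secure domination number satisfies γ_{0s}(C_n) = ⌈3n/7⌉. -/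
/-!
On a cycle, swapping a vertex `u ∉ S` for a neighbour `v ∈ S` can only leave undominated the
vertex `w` on the far side of `v`; so the swap keeps `S` dominating iff `w` or the next vertex
after `w` lies in `S`. Read along the cycle, this local rule forces at least three elements of
`S` into every seven consecutive vertices, and averaging over all `n` windows gives
`7 |S| ≥ 3 n`. Conversely the vertices with index `≡ 0, 2, 4 (mod 7)` obey the local rule and
number `⌈3n/7⌉`; for `n ≥ 11` the vertices `2` and `9` are isolated in this set and have no
common neighbour, so one of them stays isolated after any swap.
-/

open Finset SimpleGraph Fin.NatCast

section General

variable {V : Type*} [DecidableEq V] {G : SimpleGraph V} {S : Finset V} {u v w z : V}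

def IsSecureDominating (G : SimpleGraph V) (S : Finset V) : Prop :=
  Dominates G S ∧ ∀ u ∉ S, ∃ v ∈ S, G.Adj u v ∧ Dominates G (insert u (S.erase v))

theorem IsISDS.isSecureDominating (hS : IsISDS G S) : IsSecureDominating G S :=
  ⟨hS.1.1, fun u hu => (hS.2 u hu).imp fun _ ⟨hv, huv, hT⟩ => ⟨hv, huv, hT.1⟩⟩

theorem dominates_insert_erase_iff (hS : Dominates G S)
    (hNv : ∀ x, G.Adj v x ↔ x = u ∨ x = w) (hNw : ∀ x, G.Adj w x ↔ x = v ∨ x = z)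
    (huw : u ≠ w) (huz : u ≠ z) (hvz : v ≠ z) :
    Dominates G (insert u (S.erase v)) ↔ w ∈ S ∨ z ∈ S := by
  have hvw : G.Adj v w := (hNv w).2 (Or.inr rfl)
  constructor
  · intro hT
    rcases hT w with hw | ⟨y, hy, hyw⟩
    · rcases mem_insert.1 hw with rfl | hw
      · exact absurd rfl huw
      · exact Or.inl (mem_of_mem_erase hw)
    · rcases (hNw y).1 hyw.symm with rfl | rfl
      · rcases mem_insert.1 hy with rfl | hy
        · exact absurd ((hNv y).2 (Or.inl rfl)) G.irrefl
        · exact absurd rfl (ne_of_mem_erase hy)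
      · rcases mem_insert.1 hy with rfl | hy
        · exact absurd rfl huz
        · exact Or.inr (mem_of_mem_erase hy)
  · intro hwz x
    by_cases hx : x = v ∨ G.Adj v x
    · rcases hx with rfl | hx
      · exact Or.inr ⟨u, mem_insert_self _ _, ((hNv u).2 (Or.inl rfl)).symm⟩
      · rcases (hNv x).1 hx with rfl | rfl
        · exact Or.inl (mem_insert_self _ _)
        · rcases hwz with hw | hz
          · exact Or.inl (mem_insert_of_mem (mem_erase.2 ⟨hvw.ne.symm, hw⟩))
          · exact Or.inr ⟨z, mem_insert_of_mem (mem_erase.2 ⟨hvz.symm, hz⟩),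
              ((hNw z).2 (Or.inr rfl)).symm⟩
    · rw [not_or] at hx
      rcases hS x with hxS | ⟨y, hy, hyx⟩
      · exact Or.inl (mem_insert_of_mem (mem_erase.2 ⟨hx.1, hxS⟩))
      · refine Or.inr ⟨y, mem_insert_of_mem (mem_erase.2 ⟨?_, hy⟩), hyx⟩
        rintro rfl
        exact hx.2 hyx

theorem IsSecureDominating.isISDS {w₁ w₂ : V} (hS : IsSecureDominating G S)
    (hw₁ : w₁ ∈ S) (hw₂ : w₂ ∈ S) (hiso₁ : ∀ y ∈ S, ¬G.Adj w₁ y) (hiso₂ : ∀ y ∈ S, ¬G.Adj w₂ y)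
    (hcommon : ∀ u, G.Adj u w₁ → ¬G.Adj u w₂) : IsISDS G S := by
  refine ⟨⟨hS.1, w₁, hw₁, hiso₁⟩, fun u hu => ?_⟩
  obtain ⟨v, hv, huv, hT⟩ := hS.2 u hu
  -- an isolated vertex of `S` not adjacent to `u` stays isolated after the swap
  obtain ⟨w, hw, hiso, hwu⟩ : ∃ w ∈ S, (∀ y ∈ S, ¬G.Adj w y) ∧ ¬G.Adj u w := by
    by_cases hu₁ : G.Adj u w₁
    · exact ⟨w₂, hw₂, hiso₂, hcommon u hu₁⟩
    · exact ⟨w₁, hw₁, hiso₁, hu₁⟩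
  refine ⟨v, hv, huv, hT, w, mem_insert_of_mem (mem_erase.2 ⟨?_, hw⟩), fun y hy => ?_⟩
  · rintro rfl
    exact hwu huv
  · rcases mem_insert.1 hy with rfl | hy
    · exact fun h => hwu h.symm
    · exact hiso y (mem_of_mem_erase hy)

instance [Fintype V] [DecidableRel G.Adj] : Decidable (Dominates G S) :=
  inferInstanceAs (Decidable (∀ u, u ∈ S ∨ ∃ v ∈ S, G.Adj v u))

instance [Fintype V] [DecidableRel G.Adj] : Decidable (IsIDS G S) :=
  inferInstanceAs (Decidable (Dominates G S ∧ ∃ v ∈ S, ∀ w ∈ S, ¬G.Adj v w))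

instance [Fintype V] [DecidableRel G.Adj] : Decidable (IsISDS G S) :=
  inferInstanceAs (Decidable (IsIDS G S ∧
    ∀ u ∉ S, ∃ v ∈ S, G.Adj u v ∧ IsIDS G (insert u (S.erase v))))

end General

/-- `p j` plays the role of `v_j ∈ S` with indices read modulo `n`: the first field says that
`j + 1` is dominated, the second that `j + 3 ∉ S` can be swapped with a neighbour `v ∈ S`
leaving the vertex beyond `v` dominated. -/
structure IsLocallySecure (p : ℕ → Prop) : Prop where
  dominates (j : ℕ) : p j ∨ p (j + 1) ∨ p (j + 2)
  secure (j : ℕ) : ¬p (j + 3) → p (j + 4) ∧ (p (j + 5) ∨ p (j + 6)) ∨ p (j + 2) ∧ (p (j + 1) ∨ p j)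

theorem IsLocallySecure.three_le_sum_window {p : ℕ → Prop} [DecidablePred p]
    (hp : IsLocallySecure p) (j : ℕ) : 3 ≤ ∑ k ∈ range 7, if p (j + k) then 1 else 0 := by
  -- clauses: `dominates` at `j, …, j + 4`, `secure` at `j`, and `secure` at `j + 1`, `j + 2`
  -- cut down to the window
  have window : ∀ b₀ b₁ b₂ b₃ b₄ b₅ b₆ : Bool,
      (b₀ || (b₁ || b₂)) → (b₁ || (b₂ || b₃)) → (b₂ || (b₃ || b₄)) → (b₃ || (b₄ || b₅)) →
      (b₄ || (b₅ || b₆)) → (b₃ || (b₄ && (b₅ || b₆) || b₂ && (b₁ || b₀))) →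
      (b₄ || b₅ || b₃ && (b₂ || b₁)) → (b₅ || b₆ || b₄ && (b₃ || b₂)) →
      3 ≤ (bif b₀ then 1 else 0) + (bif b₁ then 1 else 0) + (bif b₂ then 1 else 0) +
        (bif b₃ then 1 else 0) + (bif b₄ then 1 else 0) + (bif b₅ then 1 else 0) +
        (bif b₆ then 1 else 0) := by
    decide
  have key := window (p j) (p (j + 1)) (p (j + 2)) (p (j + 3)) (p (j + 4)) (p (j + 5)) (p (j + 6))
  simp only [Bool.or_eq_true, Bool.and_eq_true, decide_eq_true_eq, Bool.cond_decide] at key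
  simp only [sum_range_succ, sum_range_zero, zero_add, add_zero]
  have sec₁ := hp.secure (j + 1)
  have sec₂ := hp.secure (j + 2)
  simp only [add_assoc, Nat.reduceAdd] at sec₁ sec₂
  exact key (hp.dominates j) (hp.dominates (j + 1)) (hp.dominates (j + 2)) (hp.dominates (j + 3))
    (hp.dominates (j + 4)) (or_iff_not_imp_left.2 (hp.secure j)) (by tauto) (by tauto)

namespace Fin

variable {n : ℕ} [NeZero n]

theorem natCast_ne_natCast_add (i : ℕ) {k : ℕ} (hk : 0 < k) (hkn : k < n) :
    (i : Fin n) ≠ ((i + k : ℕ) : Fin n) := by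
  rw [Nat.cast_add, ne_eq, left_eq_add, Fin.natCast_eq_zero]
  exact fun h => absurd (Nat.le_of_dvd hk h) (by omega)

theorem exists_natCast_add_eq (x : Fin n) {k : ℕ} (hk : k ≤ n) :
    ∃ j : ℕ, ((j + k : ℕ) : Fin n) = x :=
  ⟨x.val + (n - k), by rw [add_assoc, Nat.sub_add_cancel hk, Nat.cast_add, Fin.natCast_self,
    add_zero, Fin.cast_val_eq_self]⟩

theorem sum_range_natCast_add_mem (S : Finset (Fin n)) (k : ℕ) :
    ∑ j ∈ range n, (if ((j + k : ℕ) : Fin n) ∈ S then 1 else 0) = #S := by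
  rw [← Fin.sum_univ_eq_sum_range (fun j => if ((j + k : ℕ) : Fin n) ∈ S then 1 else 0)]
  simp only [Nat.cast_add, Fin.cast_val_eq_self]
  rw [Fintype.sum_equiv (Equiv.addRight (k : Fin n)) (fun x => if x + (k : Fin n) ∈ S then 1 else 0)
    (fun x => if x ∈ S then 1 else 0) fun _ => rfl, sum_boole, filter_univ_mem, Nat.cast_id]

end Fin

section Cycle

variable {n : ℕ} [NeZero n]

open Fin.CommRing in
theorem cycleGraph_adj_natCast_succ (hn : 2 ≤ n) (j : ℕ) (x : Fin n) :
    (cycleGraph n).Adj ((j + 1 : ℕ) : Fin n) x ↔ x = (j : Fin n) ∨ x = ((j + 2 : ℕ) : Fin n) := by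
  obtain ⟨m, rfl⟩ : ∃ m, n = m + 2 := ⟨n - 2, by omega⟩
  rw [cycleGraph_adj]
  push_cast
  constructor
  · rintro (h | h)
    · exact Or.inl (by linear_combination -h)
    · exact Or.inr (by linear_combination h)
  · rintro (rfl | rfl)
    · exact Or.inl (by ring)
    · exact Or.inr (by ring)

theorem cycleGraph_dominates_swap_succ_iff {S : Finset (Fin n)} (hn : 4 ≤ n)
    (hS : Dominates (cycleGraph n) S) (j : ℕ) :
    Dominates (cycleGraph n) (insert ((j + 3 : ℕ) : Fin n) (S.erase ((j + 4 : ℕ) : Fin n))) ↔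
      ((j + 5 : ℕ) : Fin n) ∈ S ∨ ((j + 6 : ℕ) : Fin n) ∈ S :=
  dominates_insert_erase_iff hS (cycleGraph_adj_natCast_succ (by omega) (j + 3))
    (cycleGraph_adj_natCast_succ (by omega) (j + 4))
    (Fin.natCast_ne_natCast_add (j + 3) (k := 2) (by omega) (by omega))
    (Fin.natCast_ne_natCast_add (j + 3) (k := 3) (by omega) (by omega))
    (Fin.natCast_ne_natCast_add (j + 4) (k := 2) (by omega) (by omega))

theorem cycleGraph_dominates_swap_pred_iff {S : Finset (Fin n)} (hn : 4 ≤ n)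
    (hS : Dominates (cycleGraph n) S) (j : ℕ) :
    Dominates (cycleGraph n) (insert ((j + 3 : ℕ) : Fin n) (S.erase ((j + 2 : ℕ) : Fin n))) ↔
      ((j + 1 : ℕ) : Fin n) ∈ S ∨ (j : Fin n) ∈ S :=
  dominates_insert_erase_iff hS
    (fun x => (cycleGraph_adj_natCast_succ (by omega) (j + 1) x).trans or_comm)
    (fun x => (cycleGraph_adj_natCast_succ (by omega) j x).trans or_comm)
    (Fin.natCast_ne_natCast_add (j + 1) (k := 2) (by omega) (by omega)).symm
    (Fin.natCast_ne_natCast_add j (k := 3) (by omega) (by omega)).symm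
    (Fin.natCast_ne_natCast_add j (k := 2) (by omega) (by omega)).symm

theorem isSecureDominating_cycleGraph_iff (hn : 4 ≤ n) {S : Finset (Fin n)} :
    IsSecureDominating (cycleGraph n) S ↔ IsLocallySecure (fun j : ℕ => (j : Fin n) ∈ S) := by
  have adj := cycleGraph_adj_natCast_succ (n := n) (by omega)
  constructor
  · rintro ⟨hdom, hsec⟩
    refine ⟨fun j => ?_, fun j hj => ?_⟩
    · rcases hdom ((j + 1 : ℕ) : Fin n) with h | ⟨y, hy, hyj⟩
      · exact Or.inr (Or.inl h)
      · rcases (adj j y).1 hyj.symm with rfl | rfl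
        · exact Or.inl hy
        · exact Or.inr (Or.inr hy)
    · obtain ⟨v, hv, huv, hT⟩ := hsec _ hj
      rcases (adj (j + 2) v).1 huv with rfl | rfl
      · exact Or.inr ⟨hv, (cycleGraph_dominates_swap_pred_iff hn hdom j).1 hT⟩
      · exact Or.inl ⟨hv, (cycleGraph_dominates_swap_succ_iff hn hdom j).1 hT⟩
  · intro hp
    have hdom : Dominates (cycleGraph n) S := fun x => by
      obtain ⟨j, rfl⟩ := Fin.exists_natCast_add_eq x (k := 1) (by omega)
      rcases hp.dominates j with h | h | h
      · exact Or.inr ⟨_, h, ((adj j _).2 (Or.inl rfl)).symm⟩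
      · exact Or.inl h
      · exact Or.inr ⟨_, h, ((adj j _).2 (Or.inr rfl)).symm⟩
    refine ⟨hdom, fun u hu => ?_⟩
    obtain ⟨j, rfl⟩ := Fin.exists_natCast_add_eq u (k := 3) (by omega)
    rcases hp.secure j hu with ⟨hv, hT⟩ | ⟨hv, hT⟩
    · exact ⟨_, hv, (adj (j + 2) _).2 (Or.inr rfl),
        (cycleGraph_dominates_swap_succ_iff hn hdom j).2 hT⟩
    · exact ⟨_, hv, (adj (j + 2) _).2 (Or.inl rfl),
        (cycleGraph_dominates_swap_pred_iff hn hdom j).2 hT⟩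

theorem IsSecureDominating.three_mul_le_seven_mul_card (hn : 4 ≤ n) {S : Finset (Fin n)}
    (hS : IsSecureDominating (cycleGraph n) S) : 3 * n ≤ 7 * #S := by
  have hp := (isSecureDominating_cycleGraph_iff hn).1 hS
  calc 3 * n = ∑ _j ∈ range n, 3 := by rw [sum_const, card_range, smul_eq_mul, mul_comm]
    _ ≤ ∑ j ∈ range n, ∑ k ∈ range 7, if ((j + k : ℕ) : Fin n) ∈ S then 1 else 0 :=
      sum_le_sum fun j _ => hp.three_le_sum_window j
    _ = ∑ k ∈ range 7, ∑ j ∈ range n, if ((j + k : ℕ) : Fin n) ∈ S then 1 else 0 := sum_comm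
    _ = 7 * #S := by simp only [Fin.sum_range_natCast_add_mem, sum_const, card_range, smul_eq_mul]

end Cycle

def cyclePattern (n : ℕ) : Finset (Fin n) :=
  {x | x.val % 7 = 0 ∨ x.val % 7 = 2 ∨ x.val % 7 = 4}

theorem card_cyclePattern (n : ℕ) : #(cyclePattern n) = (3 * n + 6) / 7 := by
  rw [cyclePattern, card_filter,
    Fin.sum_univ_eq_sum_range (fun i => if i % 7 = 0 ∨ i % 7 = 2 ∨ i % 7 = 4 then 1 else 0)]
  induction n with
  | zero => rfl
  | succ n ih =>
    rw [sum_range_succ, ih]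
    obtain ⟨q, r, hr, rfl⟩ : ∃ q r, r < 7 ∧ n = 7 * q + r :=
      ⟨n / 7, n % 7, Nat.mod_lt _ (by norm_num), (Nat.div_add_mod n 7).symm⟩
    interval_cases r <;> split_ifs <;> omega

section Cycle

variable {n : ℕ} [NeZero n]

theorem natCast_mem_cyclePattern (j : ℕ) :
    (j : Fin n) ∈ cyclePattern n ↔ j % n % 7 = 0 ∨ j % n % 7 = 2 ∨ j % n % 7 = 4 := by
  simp [cyclePattern, Fin.val_natCast]

theorem isLocallySecure_cyclePattern (hn : 7 ≤ n) :
    IsLocallySecure (fun j : ℕ => (j : Fin n) ∈ cyclePattern n) := by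
  simp only [natCast_mem_cyclePattern]
  refine ⟨fun j => ?_, fun j => ?_⟩
  all_goals
    have := Nat.mod_lt j (by omega : 0 < n)
    simp only [Nat.add_mod_eq_ite, Nat.mod_eq_of_lt (show 1 < n by omega),
      Nat.mod_eq_of_lt (show 2 < n by omega), Nat.mod_eq_of_lt (show 3 < n by omega),
      Nat.mod_eq_of_lt (show 4 < n by omega), Nat.mod_eq_of_lt (show 5 < n by omega),
      Nat.mod_eq_of_lt (show 6 < n by omega)]
    split_ifs <;> omega

theorem isISDS_cyclePattern (hn : 11 ≤ n) : IsISDS (cycleGraph n) (cyclePattern n) := by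
  have mem (j : ℕ) (hj : j < n) :
      (j : Fin n) ∈ cyclePattern n ↔ j % 7 = 0 ∨ j % 7 = 2 ∨ j % 7 = 4 := by
    rw [natCast_mem_cyclePattern, Nat.mod_eq_of_lt hj]
  have adj := cycleGraph_adj_natCast_succ (n := n) (by omega)
  have ne (i k : ℕ) (hk : 0 < k) (hkn : k < n) := Fin.natCast_ne_natCast_add (n := n) i hk hkn
  refine ((isSecureDominating_cycleGraph_iff (by omega)).2 (isLocallySecure_cyclePattern (by omega))
    ).isISDS (w₁ := ((2 : ℕ) : Fin n)) (w₂ := ((9 : ℕ) : Fin n)) ((mem 2 (by omega)).2 (by omega))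
    ((mem 9 (by omega)).2 (by omega)) ?_ ?_ ?_
  · intro y hy hadj
    rcases (adj 1 y).1 hadj with rfl | rfl
    · exact absurd ((mem 1 (by omega)).1 hy) (by omega)
    · exact absurd ((mem 3 (by omega)).1 hy) (by omega)
  · intro y hy hadj
    rcases (adj 8 y).1 hadj with rfl | rfl
    · exact absurd ((mem 8 (by omega)).1 hy) (by omega)
    · exact absurd ((mem 10 (by omega)).1 hy) (by omega)
  · intro u h₂ h₉
    rcases (adj 1 u).1 h₂.symm with rfl | rfl <;> rcases (adj 8 _).1 h₉.symm with h | h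
    · exact ne 1 7 (by omega) (by omega) h
    · exact ne 1 9 (by omega) (by omega) h
    · exact ne 3 5 (by omega) (by omega) h
    · exact ne 3 7 (by omega) (by omega) h

end Cycle

theorem exists_isISDS_cycleGraph_card {n : ℕ} (hn : 5 ≤ n) :
    ∃ S : Finset (Fin n), IsISDS (cycleGraph n) S ∧ #S = (3 * n + 6) / 7 := by
  rcases le_or_gt 11 n with h | h
  · have : NeZero n := ⟨by omega⟩
    exact ⟨cyclePattern n, isISDS_cyclePattern h, card_cyclePattern n⟩
  -- below 11 the pattern lacks the isolated vertices `2` and `9`, and for `n = 8` it is not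
  -- isolate secure at all
  interval_cases n
  · exact ⟨cyclePattern 5, by decide, card_cyclePattern 5⟩
  · exact ⟨cyclePattern 6, by decide, card_cyclePattern 6⟩
  · exact ⟨cyclePattern 7, by decide, card_cyclePattern 7⟩
  · exact ⟨{0, 2, 4, 6}, by decide, rfl⟩
  · exact ⟨cyclePattern 9, by decide, card_cyclePattern 9⟩
  · exact ⟨cyclePattern 10, by decide, card_cyclePattern 10⟩

/-- `(3 * n + 6) / 7 = ⌈3n/7⌉` in natural-number division. -/
theorem isdNum_cycleGraph (n : ℕ) (hn : 5 ≤ n) :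
    isdNum (SimpleGraph.cycleGraph n) = (3 * n + 6) / 7 := by
  have : NeZero n := ⟨by omega⟩
  obtain ⟨S, hS, hcard⟩ := exists_isISDS_cycleGraph_card hn
  refine le_antisymm (Nat.sInf_le ⟨S, hS, hcard⟩) (le_csInf ⟨_, S, hS, rfl⟩ ?_)
  rintro _ ⟨T, hT, rfl⟩
  have := hT.isSecureDominating.three_mul_le_seven_mul_card (by omega)
  omega
end

section
/- Let G=(V,E) be a finite simple graph and let X ⊆ V be a dominating set of G. Then X is a secure dominating set of G if and only if for each u ∈ V \ X there exists v ∈ X adjacent to u such that the induced subgraph G[epn(v,X) ∪ {u,v}] is a complete graph. -/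
def IsSDS {V : Type*} [DecidableEq V] (G : SimpleGraph V) (S : Finset V) : Prop :=
  Dominates G S ∧ ∀ u ∉ S, ∃ v ∈ S, G.Adj u v ∧ Dominates G (insert u (S.erase v))

/-- The external private neighbors of `v` with respect to `X`:
`epn(v, X) = {w ∈ V \ X : N[w] ∩ X = {v}}`. -/
def epn {V : Type*} (G : SimpleGraph V) (v : V) (X : Finset V) : Set V :=
  {w | w ∉ X ∧ {x : V | x ∈ X ∧ (x = w ∨ G.Adj x w)} = {v}}

/-- A dominating set `X` is a secure dominating set iff for each `u ∉ X` there is a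
neighbor `v ∈ X` of `u` such that the subgraph induced by `epn(v,X) ∪ {u, v}` is complete. -/
theorem isSDS_iff_epn_complete {V : Type*} [DecidableEq V] (G : SimpleGraph V)
    (X : Finset V) (hdom : Dominates G X) :
    IsSDS G X ↔ ∀ u ∉ X, ∃ v ∈ X, G.Adj u v ∧
      ∀ a ∈ epn G v X ∪ {u, v}, ∀ b ∈ epn G v X ∪ {u, v}, a ≠ b → G.Adj a b := by
  constructor
  · rintro ⟨-, hsec⟩ u hu
    obtain ⟨v, hvX, hadj, hdom'⟩ := hsec u hu
    -- key: a vertex in epn(v,X) outside X has only v as closed neighbor in X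
    have key : ∀ a ∈ epn G v X, ∀ b, b ≠ a → b ∉ X → (b = u ∨ b ∈ epn G v X) → G.Adj a b := by
      intro a ha b hba hbX hb
      obtain ⟨haX, haN⟩ := ha
      -- a's only defender is v
      have honly : ∀ x ∈ X, (x = a ∨ G.Adj x a) → x = v := by
        intro x hx hxa
        have : x ∈ ({v} : Set V) := haN ▸ (by exact ⟨hx, hxa⟩)
        simpa using this
      rcases hb with rfl | hb
      · -- b = u : use domination by insert u (X.erase v)
        rcases hdom' a with hmem | ⟨x, hx, hxa⟩
        · rcases Finset.mem_insert.1 hmem with rfl | hmem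
          · exact absurd rfl hba
          · exact absurd (Finset.mem_of_mem_erase hmem) haX
        · rcases Finset.mem_insert.1 hx with rfl | hx
          · exact hxa.symm
          · have := honly x (Finset.mem_of_mem_erase hx) (Or.inr hxa)
            exact absurd this (Finset.ne_of_mem_erase hx)
      · -- b ∈ epn v X : b's defender must be v; then a dominated in insert b (X.erase v)
        obtain ⟨hbX', hbN⟩ := hb
        obtain ⟨w, hwX, hwb, hdomb⟩ := hsec b hbX'
        have hw : w = v := by
          have : w ∈ ({v} : Set V) := hbN ▸ (by exact ⟨hwX, Or.inr hwb.symm⟩)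
          simpa using this
        subst hw
        rcases hdomb a with hmem | ⟨x, hx, hxa⟩
        · rcases Finset.mem_insert.1 hmem with rfl | hmem
          · exact absurd rfl hba
          · exact absurd (Finset.mem_of_mem_erase hmem) haX
        · rcases Finset.mem_insert.1 hx with rfl | hx
          · exact hxa.symm
          · have := honly x (Finset.mem_of_mem_erase hx) (Or.inr hxa)
            exact absurd this (Finset.ne_of_mem_erase hx)
    refine ⟨v, hvX, hadj, ?_⟩
    have epnv : ∀ a ∈ epn G v X, G.Adj v a := by
      intro a ha
      obtain ⟨haX, haN⟩ := ha
      have : v ∈ {x : V | x ∈ X ∧ (x = a ∨ G.Adj x a)} := haN ▸ rfl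
      rcases this.2 with rfl | h
      · exact absurd hvX haX
      · exact h
    intro a ha b hb hab
    have epnX : ∀ c ∈ epn G v X, c ∉ X := fun c hc => hc.1
    rcases ha with ha | ha
    · rcases hb with hb | hb
      · exact key a ha b (Ne.symm hab) (epnX b hb) (Or.inr hb)
      · rcases hb with rfl | hb
        · exact key a ha b (Ne.symm hab) hu (Or.inl rfl)
        · simp only [Set.mem_singleton_iff] at hb; subst hb
          exact (epnv a ha).symm
    · rcases hb with hb | hb
      · rcases ha with rfl | ha
        · exact (key b hb a hab hu (Or.inl rfl)).symm
        · simp only [Set.mem_singleton_iff] at ha; subst ha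
          exact epnv b hb
      · rcases ha with rfl | ha <;> rcases hb with rfl | hb
        · exact absurd rfl hab
        · simp only [Set.mem_singleton_iff] at hb; subst hb; exact hadj
        · simp only [Set.mem_singleton_iff] at ha; subst ha; exact hadj.symm
        · simp only [Set.mem_singleton_iff] at ha hb; subst ha; subst hb
          exact absurd rfl hab
  · intro h
    refine ⟨hdom, fun u hu => ?_⟩
    obtain ⟨v, hvX, hadj, hcomp⟩ := h u hu
    refine ⟨v, hvX, hadj, fun w => ?_⟩
    have hvu : v ≠ u := fun e => hu (e ▸ hvX)
    by_cases hwX : w ∈ X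
    · by_cases hwv : w = v
      · subst hwv
        exact Or.inr ⟨u, Finset.mem_insert_self _ _, hadj⟩
      · exact Or.inl (Finset.mem_insert_of_mem (Finset.mem_erase.2 ⟨hwv, hwX⟩))
    · by_cases hwu : w = u
      · exact Or.inl (hwu ▸ Finset.mem_insert_self _ _)
      · by_cases hwe : w ∈ epn G v X
        · have : G.Adj u w := hcomp u (Or.inr (Set.mem_insert _ _)) w (Or.inl hwe)
            (fun e => hwu e.symm)
          exact Or.inr ⟨u, Finset.mem_insert_self _ _, this⟩
        · -- w has a closed neighbor in X other than v
          have hne : {x : V | x ∈ X ∧ (x = w ∨ G.Adj x w)} ≠ {v} := by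
            intro e; exact hwe ⟨hwX, e⟩
          rcases hdom w with h1 | ⟨x, hxX, hxw⟩
          · exact absurd h1 hwX
          · have hxmem : x ∈ {x : V | x ∈ X ∧ (x = w ∨ G.Adj x w)} := ⟨hxX, Or.inr hxw⟩
            by_cases hall : ∀ y ∈ {x : V | x ∈ X ∧ (x = w ∨ G.Adj x w)}, y = v
            · exfalso
              apply hne
              apply Set.eq_singleton_iff_unique_mem.2
              refine ⟨?_, hall⟩
              have := hall x hxmem
              exact this ▸ hxmem
            · push_neg at hall
              obtain ⟨y, ⟨hyX, hy⟩, hyv⟩ := hall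
              rcases hy with rfl | hy
              · exact absurd hyX hwX
              · exact Or.inr ⟨y, Finset.mem_insert_of_mem (Finset.mem_erase.2 ⟨hyv, hyX⟩), hy⟩
end

section
/- Let G be a finite simple bipartite graph and let S be a secure dominating set of G. Then for every vertex v ∈ S, the number of external private neighbors of v with respect to S is at most 1, i.e., |epn(v,S)| ≤ 1. -/
/-- In a bipartite graph, every vertex of a secure dominating set `S` has at most one
external private neighbor with respect to `S`. -/
theorem epn_le_one_of_bipartite {V : Type*} [DecidableEq V] (G : SimpleGraph V)
    (A : Set V) (hbip : ∀ u v : V, G.Adj u v → (u ∈ A ↔ v ∉ A))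
    (S : Finset V) (hS : IsSDS G S) :
    ∀ v ∈ S, (epn G v S).ncard ≤ 1 := by
  intro v hv
  have hadj_of_epn : ∀ w, w ∈ epn G v S → G.Adj v w := by
    rintro w ⟨hwS, hw⟩
    have hvmem : v ∈ {x : V | x ∈ S ∧ (x = w ∨ G.Adj x w)} := by
      rw [hw]; exact rfl
    rcases hvmem.2 with h | h
    · exact absurd (h ▸ hv) hwS
    · exact h
  have hsub : (epn G v S).Subsingleton := by
    rintro w1 hw1e w2 hw2e
    obtain ⟨hw1S, h1⟩ := hw1e
    obtain ⟨hw2S, h2⟩ := hw2e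
    by_contra hne
    have hv1 : G.Adj v w1 := hadj_of_epn w1 ⟨hw1S, h1⟩
    have hv2 : G.Adj v w2 := hadj_of_epn w2 ⟨hw2S, h2⟩
    obtain ⟨x, hxS, hxadj, hdom⟩ := hS.2 w1 hw1S
    have hxv : x = v := by
      have : x ∈ {x : V | x ∈ S ∧ (x = w1 ∨ G.Adj x w1)} := ⟨hxS, Or.inr hxadj.symm⟩
      rwa [h1] at this
    rw [hxv] at hdom
    rcases hdom w2 with h | ⟨u, huS, hadj2⟩
    · rcases Finset.mem_insert.mp h with h | h
      · exact hne h.symm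
      · exact hw2S (Finset.mem_of_mem_erase h)
    · rcases Finset.mem_insert.mp huS with h | h
      · rw [h] at hadj2
        -- w1 adjacent to w2, both adjacent to v : bipartite contradiction
        have b1 := hbip v w1 hv1
        have b2 := hbip v w2 hv2
        have b3 := hbip w1 w2 hadj2
        tauto
      · have huS' : u ∈ S := Finset.mem_of_mem_erase h
        have hune : u ≠ v := Finset.ne_of_mem_erase h
        have : u ∈ {x : V | x ∈ S ∧ (x = w2 ∨ G.Adj x w2)} := ⟨huS', Or.inr hadj2⟩
        rw [h2] at this
        exact hune this
  rcases hsub.eq_empty_or_singleton with h | ⟨a, h⟩ <;> simp [h]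
end

section
/- Let G = (C, I, E) be a finite split graph whose vertex set is partitioned into a clique C and an independent set I, and let k be a positive integer. Construct the split graph G′ from G by adding four new vertices x_1, y_1, x_2, y_2 and adding the edges {x_1 v : v ∈ C}, {y_1 v : v ∈ C}, x_1 y_1, x_1 x_2, and y_1 y_2 (so C ∪ {x_1, y_1} is a clique and I ∪ {x_2, y_2} is an independent set in G′). Then G has a secure dominating set of size at most k if and only if G′ has an isolate secure dominating set of size at most k + 2. -/
/-- The graph `G'` built from a split graph `G` with clique `C` and independent set `Cᶜ`:
four new vertices `x₁, y₁, x₂, y₂` (encoded as `0, 1, 2, 3 : Fin 4`) are added, together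
with the edges `x₁v` and `y₁v` for every `v ∈ C`, and the edges `x₁y₁`, `x₁x₂`, `y₁y₂`. -/
def splitGadget {V : Type*} (G : SimpleGraph V) (C : Set V) :
    SimpleGraph (V ⊕ Fin 4) :=
  SimpleGraph.fromRel (fun p q =>
    (∃ u v : V, p = Sum.inl u ∧ q = Sum.inl v ∧ G.Adj u v) ∨
    (∃ v ∈ C, (p = Sum.inr 0 ∨ p = Sum.inr 1) ∧ q = Sum.inl v) ∨
    (p = Sum.inr 0 ∧ q = Sum.inr 1) ∨
    (p = Sum.inr 0 ∧ q = Sum.inr 2) ∨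
    (p = Sum.inr 1 ∧ q = Sum.inr 3))


section Aux

variable {V : Type*} {G : SimpleGraph V} {C : Set V}

lemma adj_inl_inl {u v : V} :
    (splitGadget G C).Adj (Sum.inl u) (Sum.inl v) ↔ G.Adj u v := by
  constructor
  · intro h
    rw [splitGadget, SimpleGraph.fromRel_adj] at h
    obtain ⟨hne, h | h⟩ := h <;>
      rcases h with ⟨a, b, ha, hb, hab⟩ | ⟨c, hc, h1 | h1, h2⟩ | ⟨h1, h2⟩ | ⟨h1, h2⟩ | ⟨h1, h2⟩ <;>
      simp_all
    exact hab.symm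
  · intro h
    rw [splitGadget, SimpleGraph.fromRel_adj]
    exact ⟨by simp [h.ne], Or.inl (Or.inl ⟨u, v, rfl, rfl, h⟩)⟩

lemma adj_inl_inr {u : V} {i : Fin 4} :
    (splitGadget G C).Adj (Sum.inl u) (Sum.inr i) ↔ u ∈ C ∧ (i = 0 ∨ i = 1) := by
  rw [splitGadget, SimpleGraph.fromRel_adj]
  constructor
  · rintro ⟨hne, h | h⟩ <;>
      rcases h with ⟨a, b, ha, hb, hab⟩ | ⟨c, hc, h1 | h1, h2⟩ | ⟨h1, h2⟩ | ⟨h1, h2⟩ | ⟨h1, h2⟩ <;>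
      simp_all
  · rintro ⟨hu, hi | hi⟩ <;> subst hi <;>
      exact ⟨by simp, Or.inr (Or.inr (Or.inl ⟨u, hu, by simp, rfl⟩))⟩

lemma adj_inr_inl {u : V} {i : Fin 4} :
    (splitGadget G C).Adj (Sum.inr i) (Sum.inl u) ↔ u ∈ C ∧ (i = 0 ∨ i = 1) := by
  rw [SimpleGraph.adj_comm]; exact adj_inl_inr

lemma adj_two {p : V ⊕ Fin 4} :
    (splitGadget G C).Adj p (Sum.inr 2) ↔ p = Sum.inr 0 := by
  constructor
  · intro h
    rw [splitGadget, SimpleGraph.fromRel_adj] at h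
    obtain ⟨hne, h | h⟩ := h <;>
      rcases h with ⟨a, b, ha, hb, hab⟩ | ⟨c, hc, h1 | h1, h2⟩ | ⟨h1, h2⟩ | ⟨h1, h2⟩ | ⟨h1, h2⟩ <;>
      simp_all
  · rintro rfl
    rw [splitGadget, SimpleGraph.fromRel_adj]
    exact ⟨by simp, Or.inl (Or.inr (Or.inr (Or.inr (Or.inl ⟨rfl, rfl⟩))))⟩

lemma adj_three {p : V ⊕ Fin 4} :
    (splitGadget G C).Adj p (Sum.inr 3) ↔ p = Sum.inr 1 := by
  constructor
  · intro h
    rw [splitGadget, SimpleGraph.fromRel_adj] at h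
    obtain ⟨hne, h | h⟩ := h <;>
      rcases h with ⟨a, b, ha, hb, hab⟩ | ⟨c, hc, h1 | h1, h2⟩ | ⟨h1, h2⟩ | ⟨h1, h2⟩ | ⟨h1, h2⟩ <;>
      simp_all
  · rintro rfl
    rw [splitGadget, SimpleGraph.fromRel_adj]
    exact ⟨by simp, Or.inl (Or.inr (Or.inr (Or.inr (Or.inr ⟨rfl, rfl⟩))))⟩

lemma adj_01 : (splitGadget G C).Adj (Sum.inr 0) (Sum.inr 1) := by
  rw [splitGadget, SimpleGraph.fromRel_adj]
  exact ⟨by simp, Or.inl (Or.inr (Or.inr (Or.inl ⟨rfl, rfl⟩)))⟩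

lemma adj_02 : (splitGadget G C).Adj (Sum.inr 0) (Sum.inr 2) := adj_two.mpr rfl |>.symm |>.symm

lemma adj_13 : (splitGadget G C).Adj (Sum.inr 1) (Sum.inr 3) := adj_three.mpr rfl |>.symm |>.symm

end Aux

section Aux2

variable {V : Type*} {G : SimpleGraph V} {C : Set V}

lemma dom_inl {W : Finset (V ⊕ Fin 4)} (hW : Dominates (splitGadget G C) W) (z : V) :
    Sum.inl z ∈ W ∨ (∃ t, Sum.inl t ∈ W ∧ G.Adj t z) ∨
      (z ∈ C ∧ (Sum.inr 0 ∈ W ∨ Sum.inr 1 ∈ W)) := by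
  rcases hW (Sum.inl z) with h | ⟨p, hp, hadj⟩
  · exact Or.inl h
  · match p with
    | Sum.inl t => exact Or.inr (Or.inl ⟨t, hp, adj_inl_inl.mp hadj⟩)
    | Sum.inr i =>
      obtain ⟨hz, hi⟩ := adj_inr_inl.mp hadj
      rcases hi with rfl | rfl
      · exact Or.inr (Or.inr ⟨hz, Or.inl hp⟩)
      · exact Or.inr (Or.inr ⟨hz, Or.inr hp⟩)

lemma forced [DecidableEq V] {D' : Finset (V ⊕ Fin 4)}
    (hsec : ∀ u ∉ D', ∃ v ∈ D', (splitGadget G C).Adj u v ∧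
      IsIDS (splitGadget G C) (insert u (D'.erase v)))
    (h02 : Sum.inr 0 ∉ D' ∨ Sum.inr 2 ∉ D')
    (h13 : Sum.inr 1 ∉ D' ∨ Sum.inr 3 ∉ D')
    {u : V} (hu : Sum.inl u ∉ D') :
    ∃ w, Sum.inl w ∈ D' ∧ G.Adj u w ∧
      IsIDS (splitGadget G C) (insert (Sum.inl u) (D'.erase (Sum.inl w))) := by
  obtain ⟨v, hv, hadj, hIDS⟩ := hsec _ hu
  match v with
  | Sum.inl w => exact ⟨w, hv, adj_inl_inl.mp hadj, hIDS⟩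
  | Sum.inr i =>
    exfalso
    obtain ⟨huC, hi⟩ := adj_inl_inr.mp hadj
    rcases hi with rfl | rfl
    · have h2 : Sum.inr 2 ∉ D' := h02.resolve_left (fun h => h hv)
      rcases hIDS.1 (Sum.inr 2) with h | ⟨p, hp, hadjp⟩
      · simp only [Finset.mem_insert, Finset.mem_erase] at h
        rcases h with h | ⟨-, h⟩
        · exact absurd h (by simp)
        · exact h2 h
      · have hp0 := adj_two.mp hadjp
        subst hp0
        simp at hp
    · have h3 : Sum.inr 3 ∉ D' := h13.resolve_left (fun h => h hv)
      rcases hIDS.1 (Sum.inr 3) with h | ⟨p, hp, hadjp⟩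
      · simp only [Finset.mem_insert, Finset.mem_erase] at h
        rcases h with h | ⟨-, h⟩
        · exact absurd h (by simp)
        · exact h3 h
      · have hp1 := adj_three.mp hadjp
        subst hp1
        simp at hp

lemma card_aux2 {D' : Finset (V ⊕ Fin 4)} {S : Finset V} [DecidableEq V]
    (hS : ∀ v : V, v ∈ S ↔ Sum.inl v ∈ D') {a b : Fin 4}
    (ha : Sum.inr a ∈ D') (hb : Sum.inr b ∈ D') (hab : a ≠ b) :
    S.card + 2 ≤ D'.card := by
  have hsub : insert (Sum.inr a) (insert (Sum.inr b) (S.image Sum.inl : Finset (V ⊕ Fin 4))) ⊆ D' := by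
    intro p hp
    simp only [Finset.mem_insert, Finset.mem_image] at hp
    rcases hp with rfl | rfl | ⟨v, hv, rfl⟩
    · exact ha
    · exact hb
    · exact (hS v).mp hv
  have h1 : (insert (Sum.inr a) (insert (Sum.inr b) (S.image Sum.inl : Finset (V ⊕ Fin 4)))).card
      = S.card + 2 := by
    rw [Finset.card_insert_of_notMem (by simp [hab]),
      Finset.card_insert_of_notMem (by simp),
      Finset.card_image_of_injective _ Sum.inl_injective]
  calc S.card + 2 = _ := h1.symm
    _ ≤ D'.card := Finset.card_le_card hsub

lemma card_aux3 {D' : Finset (V ⊕ Fin 4)} {S : Finset V} [DecidableEq V]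
    (hS : ∀ v : V, v ∈ S ↔ Sum.inl v ∈ D') {a b c : Fin 4}
    (ha : Sum.inr a ∈ D') (hb : Sum.inr b ∈ D') (hc : Sum.inr c ∈ D')
    (hab : a ≠ b) (hac : a ≠ c) (hbc : b ≠ c) :
    S.card + 3 ≤ D'.card := by
  have hsub : insert (Sum.inr a) (insert (Sum.inr b) (insert (Sum.inr c) (S.image Sum.inl : Finset (V ⊕ Fin 4)))) ⊆ D' := by
    intro p hp
    simp only [Finset.mem_insert, Finset.mem_image] at hp
    rcases hp with rfl | rfl | rfl | ⟨v, hv, rfl⟩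
    · exact ha
    · exact hb
    · exact hc
    · exact (hS v).mp hv
  have h1 : (insert (Sum.inr a) (insert (Sum.inr b) (insert (Sum.inr c) (S.image Sum.inl : Finset (V ⊕ Fin 4))))).card
      = S.card + 3 := by
    rw [Finset.card_insert_of_notMem (by simp [hab, hac]),
      Finset.card_insert_of_notMem (by simp [hbc]),
      Finset.card_insert_of_notMem (by simp),
      Finset.card_image_of_injective _ Sum.inl_injective]
  calc S.card + 3 = _ := h1.symm
    _ ≤ D'.card := Finset.card_le_card hsub

lemma mem_conv [DecidableEq V] {D' : Finset (V ⊕ Fin 4)} {S : Finset V}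
    (hS : ∀ v : V, v ∈ S ↔ Sum.inl v ∈ D') {u w t : V}
    (ht : Sum.inl t ∈ insert (Sum.inl u) (D'.erase (Sum.inl w))) :
    t ∈ insert u (S.erase w) := by
  rcases Finset.mem_insert.mp ht with h | h
  · exact Finset.mem_insert.mpr (Or.inl (Sum.inl.inj h))
  · obtain ⟨hne, hmem⟩ := Finset.mem_erase.mp h
    exact Finset.mem_insert.mpr (Or.inr (Finset.mem_erase.mpr
      ⟨fun e => hne (by rw [e]), (hS t).mpr hmem⟩))

lemma mem_conv' [DecidableEq V] {D' : Finset (V ⊕ Fin 4)} {S : Finset V}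
    (hS : ∀ v : V, v ∈ S ↔ Sum.inl v ∈ D') {u t : V} {g : V ⊕ Fin 4}
    (ht : Sum.inl t ∈ insert (Sum.inl u) (D'.erase g)) :
    t ∈ insert u S := by
  rcases Finset.mem_insert.mp ht with h | h
  · exact Finset.mem_insert.mpr (Or.inl (Sum.inl.inj h))
  · exact Finset.mem_insert.mpr (Or.inr ((hS t).mpr (Finset.mem_of_mem_erase h)))

end Aux2

section Fwd

variable {V : Type*} {G : SimpleGraph V} {C : Set V}

lemma fwdIDS [DecidableEq V] (E : Finset V) (hE : Dominates G E) :
    IsIDS (splitGadget G C) (E.image Sum.inl ∪ {Sum.inr 2, Sum.inr 3}) := by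
  constructor
  · intro p
    match p with
    | Sum.inl z =>
      rcases hE z with hz | ⟨t, ht, hadj⟩
      · exact Or.inl (Finset.mem_union_left _ (Finset.mem_image_of_mem _ hz))
      · exact Or.inr ⟨Sum.inl t, Finset.mem_union_left _ (Finset.mem_image_of_mem _ ht),
          adj_inl_inl.mpr hadj⟩
    | Sum.inr i =>
      fin_cases i
      · exact Or.inr ⟨Sum.inr 2, by simp, adj_02.symm⟩
      · exact Or.inr ⟨Sum.inr 3, by simp, adj_13.symm⟩
      · exact Or.inl (by simp)
      · exact Or.inl (by simp)
  · refine ⟨Sum.inr 2, by simp, ?_⟩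
    intro w hw hadj
    have hw0 : w = Sum.inr 0 := adj_two.mp hadj.symm
    subst hw0
    simp at hw

lemma fwd [DecidableEq V] {D : Finset V} (hD : IsSDS G D) :
    IsISDS (splitGadget G C) (D.image Sum.inl ∪ {Sum.inr 2, Sum.inr 3}) := by
  obtain ⟨hdom, hsec⟩ := hD
  refine ⟨fwdIDS D hdom, ?_⟩
  intro p hp
  match p with
  | Sum.inl u =>
    have hu : u ∉ D := fun h => hp (Finset.mem_union_left _ (Finset.mem_image_of_mem _ h))
    obtain ⟨v, hv, hadj, hdom'⟩ := hsec u hu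
    refine ⟨Sum.inl v, Finset.mem_union_left _ (Finset.mem_image_of_mem _ hv),
      adj_inl_inl.mpr hadj, ?_⟩
    have hset : insert (Sum.inl u) ((D.image Sum.inl ∪ {Sum.inr 2, Sum.inr 3}
          : Finset (V ⊕ Fin 4)).erase (Sum.inl v))
        = (insert u (D.erase v)).image Sum.inl ∪ {Sum.inr 2, Sum.inr 3} := by
      ext q
      simp only [Finset.mem_insert, Finset.mem_erase, Finset.mem_union, Finset.mem_image,
        Finset.mem_singleton]
      constructor
      · rintro (rfl | ⟨hne, (⟨d, hd, rfl⟩ | h)⟩)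
        · exact Or.inl ⟨u, Or.inl rfl, rfl⟩
        · exact Or.inl ⟨d, Or.inr ⟨fun e => hne (by rw [e]), hd⟩, rfl⟩
        · exact Or.inr h
      · rintro (⟨d, rfl | ⟨hdv, hd⟩, rfl⟩ | h)
        · exact Or.inl rfl
        · exact Or.inr ⟨fun e => hdv (Sum.inl.inj e), Or.inl ⟨d, hd, rfl⟩⟩
        · refine Or.inr ⟨?_, Or.inr h⟩
          rcases h with rfl | rfl <;> simp
    exact hset ▸ fwdIDS _ hdom'
  | Sum.inr i =>
    fin_cases i
    · -- u = x₁ : swap with x₂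
      refine ⟨Sum.inr 2, by simp, adj_02, ?_⟩
      constructor
      · intro q
        match q with
        | Sum.inl z =>
          rcases hdom z with hz | ⟨t, ht, hadj⟩
          · exact Or.inl (by simp [hz])
          · exact Or.inr ⟨Sum.inl t, by simp [ht], adj_inl_inl.mpr hadj⟩
        | Sum.inr j =>
          fin_cases j
          · exact Or.inl (by simp)
          · exact Or.inr ⟨Sum.inr 0, by simp, adj_01⟩
          · exact Or.inr ⟨Sum.inr 0, by simp, adj_02⟩
          · exact Or.inl (by simp)
      · refine ⟨Sum.inr 3, by simp, ?_⟩
        intro w hw hadj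
        have hw1 : w = Sum.inr 1 := adj_three.mp hadj.symm
        subst hw1
        simp at hw
    · -- u = y₁ : swap with y₂
      refine ⟨Sum.inr 3, by simp, adj_13, ?_⟩
      constructor
      · intro q
        match q with
        | Sum.inl z =>
          rcases hdom z with hz | ⟨t, ht, hadj⟩
          · exact Or.inl (by simp [hz])
          · exact Or.inr ⟨Sum.inl t, by simp [ht], adj_inl_inl.mpr hadj⟩
        | Sum.inr j =>
          fin_cases j
          · exact Or.inr ⟨Sum.inr 1, by simp, adj_01.symm⟩
          · exact Or.inl (by simp)
          · exact Or.inl (by simp)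
          · exact Or.inr ⟨Sum.inr 1, by simp, adj_13⟩
      · refine ⟨Sum.inr 2, by simp, ?_⟩
        intro w hw hadj
        have hw0 : w = Sum.inr 0 := adj_two.mp hadj.symm
        subst hw0
        simp at hw
    · exact absurd (by simp : (Sum.inr 2 : V ⊕ Fin 4) ∈ _) hp
    · exact absurd (by simp : (Sum.inr 3 : V ⊕ Fin 4) ∈ _) hp

end Fwd

section Bwd

variable {V : Type*} {G : SimpleGraph V} {C : Set V}

lemma bwd [Fintype V] [DecidableEq V]
    (hClique : ∀ u ∈ C, ∀ v ∈ C, u ≠ v → G.Adj u v)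
    (hInd : ∀ u ∉ C, ∀ v ∉ C, ¬ G.Adj u v)
    {D' : Finset (V ⊕ Fin 4)} (hISDS : IsISDS (splitGadget G C) D') :
    ∃ D : Finset V, IsSDS G D ∧ D.card + 2 ≤ D'.card := by
  classical
  obtain ⟨⟨hdom, -⟩, hsec⟩ := hISDS
  set S : Finset V := Finset.univ.filter (fun v => Sum.inl v ∈ D') with hSdef
  have hS : ∀ v : V, v ∈ S ↔ Sum.inl v ∈ D' := by
    intro v; simp [hSdef]
  have hx : Sum.inr 0 ∈ D' ∨ Sum.inr 2 ∈ D' := by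
    rcases hdom (Sum.inr 2) with h | ⟨p, hp, hadj⟩
    · exact Or.inr h
    · have h0 := adj_two.mp hadj
      subst h0; exact Or.inl hp
  have hy : Sum.inr 1 ∈ D' ∨ Sum.inr 3 ∈ D' := by
    rcases hdom (Sum.inr 3) with h | ⟨p, hp, hadj⟩
    · exact Or.inr h
    · have h1 := adj_three.mp hadj
      subst h1; exact Or.inl hp
  have hcard2 : S.card + 2 ≤ D'.card := by
    rcases hx with h | h <;> rcases hy with h' | h' <;>
      exact card_aux2 hS h h' (by decide)
  by_cases hCS : ∀ c ∈ C, c ∈ S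
  · -- Case A : C ⊆ S, take D = S
    refine ⟨S, ⟨?_, ?_⟩, hcard2⟩
    · -- dominates
      intro z
      by_cases hz : z ∈ S
      · exact Or.inl hz
      · rcases dom_inl hdom z with h | ⟨t, ht, hadj⟩ | ⟨hzC, -⟩
        · exact Or.inl ((hS z).mpr h)
        · exact Or.inr ⟨t, (hS t).mpr ht, hadj⟩
        · exact Or.inl (hCS z hzC)
    · -- secure
      intro u hu
      have huD : Sum.inl u ∉ D' := fun h => hu ((hS u).mpr h)
      obtain ⟨v, hv, hadj, hIDS⟩ := hsec _ huD
      obtain ⟨w, hwD, hadjuw, hW⟩ : ∃ w, Sum.inl w ∈ D' ∧ G.Adj u w ∧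
          Dominates (splitGadget G C) (insert (Sum.inl u) (D'.erase (Sum.inl w))) := by
        match v with
        | Sum.inl w => exact ⟨w, hv, adj_inl_inl.mp hadj, hIDS.1⟩
        | Sum.inr i =>
          obtain ⟨huC, -⟩ := adj_inl_inr.mp hadj
          exact absurd (hCS u huC) hu
      refine ⟨w, (hS w).mpr hwD, hadjuw, ?_⟩
      intro z
      by_cases hzC : z ∈ C
      · have hzS := hCS z hzC
        by_cases hzw : z = w
        · subst hzw
          exact Or.inr ⟨u, Finset.mem_insert_self _ _, hadjuw⟩
        · exact Or.inl (Finset.mem_insert_of_mem (Finset.mem_erase.mpr ⟨hzw, hzS⟩))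
      · rcases dom_inl hW z with h | ⟨t, ht, hadj'⟩ | ⟨hC', -⟩
        · exact Or.inl (mem_conv hS h)
        · exact Or.inr ⟨t, mem_conv hS ht, hadj'⟩
        · exact absurd hC' hzC
  · push_neg at hCS
    obtain ⟨c, hcC, hcS⟩ := hCS
    by_cases hT3 : (Sum.inr 0 ∈ D' ∧ Sum.inr 2 ∈ D') ∨ (Sum.inr 1 ∈ D' ∧ Sum.inr 3 ∈ D')
    · -- Case B1 : at least three gadget vertices, take D = insert c S
      have hcard3 : S.card + 3 ≤ D'.card := by
        rcases hT3 with ⟨h0, h2⟩ | ⟨h1, h3⟩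
        · rcases hy with h' | h'
          · exact card_aux3 hS h0 h2 h' (by decide) (by decide) (by decide)
          · exact card_aux3 hS h0 h2 h' (by decide) (by decide) (by decide)
        · rcases hx with h' | h'
          · exact card_aux3 hS h1 h3 h' (by decide) (by decide) (by decide)
          · exact card_aux3 hS h1 h3 h' (by decide) (by decide) (by decide)
      refine ⟨insert c S, ⟨?_, ?_⟩, by
        rw [Finset.card_insert_of_notMem hcS]; omega⟩
      · -- dominates
        intro z
        by_cases hzC : z ∈ C
        · by_cases hzc : z = c
          · exact Or.inl (hzc ▸ Finset.mem_insert_self _ _)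
          · exact Or.inr ⟨c, Finset.mem_insert_self _ _,
              hClique c hcC z hzC (fun e => hzc e.symm)⟩
        · rcases dom_inl hdom z with h | ⟨t, ht, hadj⟩ | ⟨hC', -⟩
          · exact Or.inl (Finset.mem_insert_of_mem ((hS z).mpr h))
          · exact Or.inr ⟨t, Finset.mem_insert_of_mem ((hS t).mpr ht), hadj⟩
          · exact absurd hC' hzC
      · -- secure
        intro u hu
        have huc : u ≠ c := fun e => hu (e ▸ Finset.mem_insert_self _ _)
        have huS : u ∉ S := fun h => hu (Finset.mem_insert_of_mem h)
        have huD : Sum.inl u ∉ D' := fun h => huS ((hS u).mpr h)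
        obtain ⟨v, hv, hadj, hIDS⟩ := hsec _ huD
        match v with
        | Sum.inl w =>
          have hwS : w ∈ S := (hS w).mpr hv
          have hwc : c ≠ w := fun e => hcS (e ▸ hwS)
          refine ⟨w, Finset.mem_insert_of_mem hwS, adj_inl_inl.mp hadj, ?_⟩
          rw [Finset.erase_insert_of_ne hwc]
          intro z
          by_cases hzC : z ∈ C
          · by_cases hzc : z = c
            · exact Or.inl (hzc ▸ Finset.mem_insert_of_mem (Finset.mem_insert_self _ _))
            · exact Or.inr ⟨c, Finset.mem_insert_of_mem (Finset.mem_insert_self _ _),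
                hClique c hcC z hzC (fun e => hzc e.symm)⟩
          · rcases dom_inl hIDS.1 z with h | ⟨t, ht, hadj'⟩ | ⟨hC', -⟩
            · rcases Finset.mem_insert.mp (mem_conv hS h) with h' | h'
              · exact Or.inl (h' ▸ Finset.mem_insert_self _ _)
              · exact Or.inl (Finset.mem_insert_of_mem (Finset.mem_insert_of_mem h'))
            · rcases Finset.mem_insert.mp (mem_conv hS ht) with h' | h'
              · exact Or.inr ⟨t, h' ▸ Finset.mem_insert_self _ _, hadj'⟩
              · exact Or.inr ⟨t, Finset.mem_insert_of_mem (Finset.mem_insert_of_mem h'), hadj'⟩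
            · exact absurd hC' hzC
        | Sum.inr i =>
          obtain ⟨huC, -⟩ := adj_inl_inr.mp hadj
          refine ⟨c, Finset.mem_insert_self _ _, hClique u huC c hcC huc, ?_⟩
          rw [Finset.erase_insert hcS]
          intro z
          by_cases hzC : z ∈ C
          · by_cases hzu : z = u
            · exact Or.inl (hzu ▸ Finset.mem_insert_self _ _)
            · exact Or.inr ⟨u, Finset.mem_insert_self _ _,
                hClique u huC z hzC (fun e => hzu e.symm)⟩
          · rcases dom_inl hIDS.1 z with h | ⟨t, ht, hadj'⟩ | ⟨hC', -⟩
            · exact Or.inl (mem_conv' hS h)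
            · exact Or.inr ⟨t, mem_conv' hS ht, hadj'⟩
            · exact absurd hC' hzC
    · -- Case B2 : exactly two gadget vertices, take D = S
      have h02 : Sum.inr 0 ∉ D' ∨ Sum.inr 2 ∉ D' := by
        by_cases h : Sum.inr 0 ∈ D'
        · exact Or.inr (fun h2 => hT3 (Or.inl ⟨h, h2⟩))
        · exact Or.inl h
      have h13 : Sum.inr 1 ∉ D' ∨ Sum.inr 3 ∉ D' := by
        by_cases h : Sum.inr 1 ∈ D'
        · exact Or.inr (fun h3 => hT3 (Or.inr ⟨h, h3⟩))
        · exact Or.inl h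
      refine ⟨S, ⟨?_, ?_⟩, hcard2⟩
      · -- dominates
        intro z
        by_cases hz : z ∈ S
        · exact Or.inl hz
        · by_cases hzC : z ∈ C
          · obtain ⟨w, hw, hadj, -⟩ := forced hsec h02 h13 (fun h => hz ((hS z).mpr h))
            exact Or.inr ⟨w, (hS w).mpr hw, hadj.symm⟩
          · rcases dom_inl hdom z with h | ⟨t, ht, hadj⟩ | ⟨hC', -⟩
            · exact absurd ((hS z).mpr h) hz
            · exact Or.inr ⟨t, (hS t).mpr ht, hadj⟩
            · exact absurd hC' hzC
      · -- secure
        intro u hu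
        have huD : Sum.inl u ∉ D' := fun h => hu ((hS u).mpr h)
        obtain ⟨w, hwD, hadjuw, hW⟩ := forced hsec h02 h13 huD
        refine ⟨w, (hS w).mpr hwD, hadjuw, ?_⟩
        intro z
        by_cases hz1 : z ∈ insert u (S.erase w)
        · exact Or.inl hz1
        by_cases hz2 : ∃ t ∈ insert u (S.erase w), G.Adj t z
        · exact Or.inr hz2
        exfalso
        push_neg at hz2
        have hzu : z ≠ u := fun e => hz1 (e ▸ Finset.mem_insert_self _ _)
        have hzS : z ∉ S := by
          intro h
          by_cases e : z = w
          · exact hz2 u (Finset.mem_insert_self _ _) (e ▸ hadjuw)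
          · exact hz1 (Finset.mem_insert_of_mem (Finset.mem_erase.mpr ⟨e, h⟩))
        have hzC : z ∈ C := by
          rcases dom_inl hW.1 z with h | ⟨t, ht, hadj⟩ | ⟨h, -⟩
          · exact absurd (mem_conv hS h) hz1
          · exact absurd hadj (hz2 t (mem_conv hS ht))
          · exact h
        have huC : u ∉ C := by
          intro h
          exact hz2 u (Finset.mem_insert_self _ _) (hClique u h z hzC (fun e => hzu e.symm))
        have hCSw : ∀ t ∈ S, t ∈ C → t = w := by
          intro t htS htC
          by_contra hne
          have htz : t ≠ z := fun e => hzS (e ▸ htS)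
          exact hz2 t (Finset.mem_insert_of_mem (Finset.mem_erase.mpr ⟨hne, htS⟩))
            (hClique t htC z hzC htz)
        have hzD' : Sum.inl z ∉ D' := fun h => hzS ((hS z).mpr h)
        obtain ⟨w', hw'D, hadjzw', hE⟩ := forced hsec h02 h13 hzD'
        have hw'w : w' = w := by
          by_contra hne
          exact hz2 w' (Finset.mem_insert_of_mem
            (Finset.mem_erase.mpr ⟨hne, (hS w').mpr hw'D⟩)) hadjzw'.symm
        subst hw'w
        rcases dom_inl hE.1 u with h | ⟨t, ht, hadj⟩ | ⟨h, -⟩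
        · rcases Finset.mem_insert.mp (mem_conv hS h) with h' | h'
          · exact hzu h'.symm
          · exact (fun hh => hu hh) (Finset.mem_of_mem_erase h')
        · rcases Finset.mem_insert.mp (mem_conv hS ht) with h' | h'
          · subst h'
            exact hz2 u (Finset.mem_insert_self _ _) hadj.symm
          · by_cases htC : t ∈ C
            · exact (Finset.mem_erase.mp h').1 (hCSw t (Finset.mem_of_mem_erase h') htC)
            · exact hInd t htC u huC hadj
        · exact huC h

end Bwd

/-- A split graph `G` (with clique `C` and independent set `Cᶜ`) has a secure dominating
set of size at most `k` iff the constructed split graph `G'` has an isolate secure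
dominating set of size at most `k + 2`. -/
theorem secure_iff_splitGadget_ISDS {V : Type*} [Fintype V] [DecidableEq V]
    (G : SimpleGraph V) (C : Set V)
    (hClique : ∀ u ∈ C, ∀ v ∈ C, u ≠ v → G.Adj u v)
    (hInd : ∀ u ∉ C, ∀ v ∉ C, ¬ G.Adj u v) (k : ℕ) (hk : 1 ≤ k) :
    (∃ D : Finset V, IsSDS G D ∧ D.card ≤ k) ↔
    (∃ D : Finset (V ⊕ Fin 4), IsISDS (splitGadget G C) D ∧ D.card ≤ k + 2) := by
  constructor
  · rintro ⟨D, hD, hcard⟩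
    refine ⟨D.image Sum.inl ∪ {Sum.inr 2, Sum.inr 3}, fwd hD, ?_⟩
    have h1 : (D.image Sum.inl ∪ {Sum.inr 2, Sum.inr 3} : Finset (V ⊕ Fin 4)).card
        ≤ (D.image Sum.inl : Finset (V ⊕ Fin 4)).card
          + ({Sum.inr 2, Sum.inr 3} : Finset (V ⊕ Fin 4)).card :=
      Finset.card_union_le _ _
    have h2 : (D.image Sum.inl : Finset (V ⊕ Fin 4)).card ≤ D.card := Finset.card_image_le
    have h3 : ({Sum.inr 2, Sum.inr 3} : Finset (V ⊕ Fin 4)).card ≤ 2 :=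
      Finset.card_insert_le _ _ |>.trans (by simp)
    omega
  · rintro ⟨D', hD', hcard⟩
    obtain ⟨D, hSDS, hle⟩ := bwd hClique hInd hD'
    exact ⟨D, hSDS, by omega⟩
end
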